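/- arXiv:2305.18266 — 7 statements merged into one kernel-verified Lean document; each statement's English description precedes it below -/
import Mathlib

section
/- Let γ > 0 and s > 0 be real numbers, let a > 0 be real, and let ℓ ∈ ℂ satisfy Re ℓ ≥ 0. Then the functions c ↦ e^{sc}·exp(−a e^{γc} − ℓ e^{γc/2}) and c ↦ e^{sc}·(γ(s+γ/2)·a e^{γc} + (γ²/2)·(a e^{γc})·(ℓ e^{γc/2}) + (γ²/4)·(ℓ e^{γc/2})²)·exp(−a e^{γc} − ℓ e^{γc/2}) are Lebesgue integrable on ℝ, and s(s+γ/2) · ∫_ℝ e^{sc} exp(−a e^{γc} − ℓ e^{γc/2}) dc = ∫_ℝ e^{sc} ( γ(s+γ/2)·a e^{γc} + (γ²/2)·(a e^{γc})·(ℓ e^{γc/2}) + (γ²/4)·(ℓ e^{γc/2})² ) exp(−a e^{γc} − ℓ e^{γc/2}) dc. -/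
open MeasureTheory

/-!
Write `M(t) = ∫ e^{tc} W(c) dc` with `W(c) = exp(-a e^{γc} - ℓ e^{γc/2})`. Since `Re ℓ ≥ 0`,
`|e^{tc} W(c)| ≤ exp(tc - a e^{γc})`, which for `t > 0` decays like `e^{tc}` at `-∞` and
doubly exponentially at `+∞`; so these moments converge and `e^{tc} W(c)` vanishes at `±∞`.
One integration by parts therefore gives `t M(t) = γ a M(t+γ) + (γ/2) ℓ M(t+γ/2)`.
Applying it at `t = s` and at `t = s + γ/2` and eliminating `M(s+γ/2)` gives the identity:
the three terms of the polynomial contribute `M(s+γ)`, `M(s+3γ/2)` and `M(s+γ)`.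
-/

open Filter Set Topology

noncomputable section

def zeroModeWeight (γ a : ℝ) (ℓ : ℂ) (c : ℝ) : ℂ :=
  Complex.exp (-(a * Real.exp (γ * c)) - ℓ * Real.exp (γ * c / 2))

def zeroModeMoment (γ a : ℝ) (ℓ : ℂ) (t : ℝ) : ℂ :=
  ∫ c : ℝ, Complex.exp (t * c) * zeroModeWeight γ a ℓ c

end

theorem cexp_ofReal_add_mul (t v c : ℝ) :
    Complex.exp ((t + v : ℝ) * c) = Complex.exp (t * c) * Real.exp (v * c) := by
  rw [Complex.ofReal_exp, ← Complex.exp_add]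
  push_cast
  congr 1
  ring

theorem hasDerivAt_zeroModeWeight (γ a : ℝ) (ℓ : ℂ) (c : ℝ) :
    HasDerivAt (zeroModeWeight γ a ℓ)
      (-(γ * a * Real.exp (γ * c) + γ / 2 * ℓ * Real.exp (γ * c / 2)) * zeroModeWeight γ a ℓ c)
      c := by
  have hexp (v : ℝ) :
      HasDerivAt (fun c : ℝ => (Real.exp (v * c) : ℂ)) (v * Real.exp (v * c)) c := by
    simpa [mul_comm] using (((hasDerivAt_id c).const_mul v).exp).ofReal_comp
  have hexponent :
      HasDerivAt (fun c : ℝ => -(a * (Real.exp (γ * c) : ℂ)) - ℓ * Real.exp (γ * c / 2))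
        (-(a * (γ * Real.exp (γ * c))) - ℓ * ((γ / 2 : ℝ) * Real.exp (γ * c / 2))) c := by
    have hhalf := (hexp (γ / 2)).const_mul ℓ
    simp only [div_mul_eq_mul_div] at hhalf
    exact ((hexp γ).const_mul (a : ℂ)).neg.sub hhalf
  refine hexponent.cexp.congr_deriv ?_
  simp only [zeroModeWeight, Complex.ofReal_div, Complex.ofReal_ofNat]
  ring

theorem hasDerivAt_cexp_mul_zeroModeWeight (γ a : ℝ) (ℓ : ℂ) (t c : ℝ) :
    HasDerivAt (fun c : ℝ => Complex.exp (t * c) * zeroModeWeight γ a ℓ c)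
      (t * (Complex.exp (t * c) * zeroModeWeight γ a ℓ c)
        - γ * a * (Complex.exp ((t + γ : ℝ) * c) * zeroModeWeight γ a ℓ c)
        - γ / 2 * ℓ * (Complex.exp ((t + γ / 2 : ℝ) * c) * zeroModeWeight γ a ℓ c)) c := by
  have hlin : HasDerivAt (fun c : ℝ => (t : ℂ) * c) t c := by
    simpa using ((hasDerivAt_id c).ofReal_comp).const_mul (t : ℂ)
  refine (hlin.cexp.mul (hasDerivAt_zeroModeWeight γ a ℓ c)).congr_deriv ?_
  rw [cexp_ofReal_add_mul, cexp_ofReal_add_mul, div_mul_eq_mul_div γ 2 c]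
  ring

theorem cexp_mul_zeroModeIntegrand_eq (γ s a : ℝ) (ℓ : ℂ) (c : ℝ) :
    Complex.exp (s * c) *
        ((γ * (s + γ / 2)) * (a * Real.exp (γ * c))
          + (γ ^ 2 / 2) * ((a : ℂ) * Real.exp (γ * c)) * (ℓ * Real.exp (γ * c / 2))
          + (γ ^ 2 / 4) * (ℓ * Real.exp (γ * c / 2)) ^ 2) *
        Complex.exp (-(a * Real.exp (γ * c)) - ℓ * Real.exp (γ * c / 2))
      = γ * (s + γ / 2) * a * (Complex.exp ((s + γ : ℝ) * c) * zeroModeWeight γ a ℓ c)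
        + γ ^ 2 / 2 * a * ℓ *
            (Complex.exp ((s + γ / 2 + γ : ℝ) * c) * zeroModeWeight γ a ℓ c)
        + γ ^ 2 / 4 * ℓ ^ 2 *
            (Complex.exp ((s + γ : ℝ) * c) * zeroModeWeight γ a ℓ c) := by
  have hsq : (Real.exp (γ * c / 2) : ℂ) ^ 2 = Real.exp (γ * c) := by
    rw [sq, ← Complex.ofReal_mul, ← Real.exp_add, add_halves]
  rw [cexp_ofReal_add_mul, cexp_ofReal_add_mul, cexp_ofReal_add_mul, div_mul_eq_mul_div γ 2 c]
  simp only [zeroModeWeight]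
  linear_combination (γ ^ 2 / 4 * ℓ ^ 2 * Complex.exp (s * c) *
    Complex.exp (-(a * Real.exp (γ * c)) - ℓ * Real.exp (γ * c / 2))) * hsq

section

variable {γ a : ℝ} {ℓ : ℂ}

theorem tendsto_mul_sub_mul_exp_atTop (hγ : 0 < γ) (ha : 0 < a) (t : ℝ) :
    Tendsto (fun c : ℝ => t * c - a * Real.exp (γ * c)) atTop atBot := by
  have hγc : Tendsto (fun c : ℝ => γ * c) atTop atTop := tendsto_id.const_mul_atTop hγ
  have hdecay : Tendsto (fun c : ℝ => γ * c * Real.exp (-(γ * c))) atTop (𝓝 0) := by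
    simpa [Function.comp_def] using (Real.tendsto_pow_mul_exp_neg_atTop_nhds_zero 1).comp hγc
  have hfactor : Tendsto (fun c : ℝ => t / γ * (γ * c * Real.exp (-(γ * c))) - a)
      atTop (𝓝 (-a)) := by
    simpa using (hdecay.const_mul (t / γ)).sub_const a
  refine ((Real.tendsto_exp_atTop.comp hγc).atTop_mul_neg (neg_neg_of_pos ha) hfactor).congr
    fun c => ?_
  simp only [Function.comp_apply, Real.exp_neg]
  field_simp

theorem integrable_exp_mul_sub_mul_exp (hγ : 0 < γ) (ha : 0 < a) {t : ℝ} (ht : 0 < t) :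
    Integrable fun c : ℝ => Real.exp (t * c - a * Real.exp (γ * c)) := by
  refine (Continuous.locallyIntegrable (by fun_prop)).integrable_of_isBigO_atBot_atTop
    (g := fun c => Real.exp (t * c)) (g' := fun c => Real.exp (-c)) ?_
    ⟨Iic 0, Iic_mem_atBot 0, integrableOn_exp_mul_Iic ht 0⟩ ?_
    ⟨Ioi 0, Ioi_mem_atTop 0, integrableOn_exp_neg_Ioi 0⟩
  · rw [Real.isBigO_exp_comp_exp_comp]
    refine isBoundedUnder_of ⟨0, fun c => ?_⟩
    simp only [Pi.sub_apply]
    nlinarith [Real.exp_pos (γ * c)]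
  · rw [Real.isBigO_exp_comp_exp_comp]
    refine ((tendsto_mul_sub_mul_exp_atTop hγ ha (t + 1)).congr fun c => ?_)
      |>.isBoundedUnder_le_atBot
    simp only [Pi.sub_apply]
    ring

theorem norm_cexp_mul_zeroModeWeight_le (hℓ : 0 ≤ ℓ.re) (t c : ℝ) :
    ‖Complex.exp (t * c) * zeroModeWeight γ a ℓ c‖
      ≤ Real.exp (t * c - a * Real.exp (γ * c)) := by
  rw [zeroModeWeight, ← Complex.exp_add, Complex.norm_exp, Real.exp_le_exp]
  have := mul_nonneg hℓ (Real.exp_pos (γ * c / 2)).le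
  simp only [Complex.add_re, Complex.sub_re, Complex.neg_re, Complex.mul_re,
    Complex.ofReal_re, Complex.ofReal_im, mul_zero, sub_zero]
  linarith

theorem integrable_cexp_mul_zeroModeWeight (hγ : 0 < γ) (ha : 0 < a) (hℓ : 0 ≤ ℓ.re) {t : ℝ}
    (ht : 0 < t) : Integrable fun c : ℝ => Complex.exp (t * c) * zeroModeWeight γ a ℓ c :=
  (integrable_exp_mul_sub_mul_exp hγ ha ht).mono'
    (by unfold zeroModeWeight; fun_prop)
    (Eventually.of_forall (norm_cexp_mul_zeroModeWeight_le hℓ t))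

theorem tendsto_cexp_mul_zeroModeWeight_atBot (ha : 0 < a) (hℓ : 0 ≤ ℓ.re) {t : ℝ}
    (ht : 0 < t) :
    Tendsto (fun c : ℝ => Complex.exp (t * c) * zeroModeWeight γ a ℓ c) atBot (𝓝 0) := by
  refine squeeze_zero_norm (fun c => (norm_cexp_mul_zeroModeWeight_le hℓ t c).trans ?_)
    (Real.tendsto_exp_atBot.comp (tendsto_id.const_mul_atBot ht))
  exact Real.exp_le_exp.2 (by simp only [id]; nlinarith [Real.exp_pos (γ * c)])

theorem tendsto_cexp_mul_zeroModeWeight_atTop (hγ : 0 < γ) (ha : 0 < a) (hℓ : 0 ≤ ℓ.re)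
    (t : ℝ) :
    Tendsto (fun c : ℝ => Complex.exp (t * c) * zeroModeWeight γ a ℓ c) atTop (𝓝 0) :=
  squeeze_zero_norm (norm_cexp_mul_zeroModeWeight_le hℓ t)
    (Real.tendsto_exp_atBot.comp (tendsto_mul_sub_mul_exp_atTop hγ ha t))

theorem mul_zeroModeMoment (hγ : 0 < γ) (ha : 0 < a) (hℓ : 0 ≤ ℓ.re) {t : ℝ} (ht : 0 < t) :
    t * zeroModeMoment γ a ℓ t
      = γ * a * zeroModeMoment γ a ℓ (t + γ)
        + γ / 2 * ℓ * zeroModeMoment γ a ℓ (t + γ / 2) := by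
  have hI₀ := integrable_cexp_mul_zeroModeWeight hγ ha hℓ ht
  have hI₁ := integrable_cexp_mul_zeroModeWeight hγ ha hℓ (t := t + γ) (by linarith)
  have hI₂ := integrable_cexp_mul_zeroModeWeight hγ ha hℓ (t := t + γ / 2) (by linarith)
  have hibp := integral_of_hasDerivAt_of_tendsto
    (hasDerivAt_cexp_mul_zeroModeWeight γ a ℓ t)
    (((hI₀.const_mul _).sub (hI₁.const_mul _)).sub (hI₂.const_mul _))
    (tendsto_cexp_mul_zeroModeWeight_atBot ha hℓ ht)
    (tendsto_cexp_mul_zeroModeWeight_atTop hγ ha hℓ t)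
  rw [integral_sub, integral_sub, integral_const_mul, integral_const_mul, integral_const_mul]
    at hibp
  · unfold zeroModeMoment
    linear_combination hibp
  · exact hI₀.const_mul _
  · exact hI₁.const_mul _
  · exact (hI₀.const_mul _).sub (hI₁.const_mul _)
  · exact hI₂.const_mul _

theorem mul_add_half_mul_zeroModeMoment (hγ : 0 < γ) (ha : 0 < a) (hℓ : 0 ≤ ℓ.re) {s : ℝ}
    (hs : 0 < s) :
    s * (s + γ / 2) * zeroModeMoment γ a ℓ s
      = γ * (s + γ / 2) * a * zeroModeMoment γ a ℓ (s + γ)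
        + γ ^ 2 / 2 * a * ℓ * zeroModeMoment γ a ℓ (s + γ / 2 + γ)
        + γ ^ 2 / 4 * ℓ ^ 2 * zeroModeMoment γ a ℓ (s + γ) := by
  have hs' := mul_zeroModeMoment hγ ha hℓ hs
  have hshifted := mul_zeroModeMoment hγ ha hℓ (t := s + γ / 2) (by positivity)
  rw [show s + γ / 2 + γ / 2 = s + γ by ring] at hshifted
  push_cast at hs' hshifted ⊢
  linear_combination (s + γ / 2 : ℂ) * hs' + γ / 2 * ℓ * hshifted

end

/-- Double integration-by-parts identity in the zero mode `c` underlying the relation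
`s(s+γ/2)·H = Ĥ` for the boundary three-point function of Liouville CFT
(Lemma 2.7 of the paper). -/
theorem liouville_zero_mode_ibp (γ s a : ℝ) (hγ : 0 < γ) (hs : 0 < s) (ha : 0 < a)
    (ℓ : ℂ) (hℓ : 0 ≤ ℓ.re) :
    Integrable (fun c : ℝ =>
      Complex.exp (s * c) *
        Complex.exp (-(a * Real.exp (γ * c)) - ℓ * Real.exp (γ * c / 2))) ∧
    Integrable (fun c : ℝ =>
      Complex.exp (s * c) *
        ((γ * (s + γ / 2)) * (a * Real.exp (γ * c))
          + (γ ^ 2 / 2) * ((a : ℂ) * Real.exp (γ * c)) * (ℓ * Real.exp (γ * c / 2))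
          + (γ ^ 2 / 4) * (ℓ * Real.exp (γ * c / 2)) ^ 2) *
        Complex.exp (-(a * Real.exp (γ * c)) - ℓ * Real.exp (γ * c / 2))) ∧
    ((s : ℂ) * (s + γ / 2)) *
        ∫ c : ℝ, Complex.exp (s * c) *
          Complex.exp (-(a * Real.exp (γ * c)) - ℓ * Real.exp (γ * c / 2)) =
      ∫ c : ℝ, Complex.exp (s * c) *
        ((γ * (s + γ / 2)) * (a * Real.exp (γ * c))
          + (γ ^ 2 / 2) * ((a : ℂ) * Real.exp (γ * c)) * (ℓ * Real.exp (γ * c / 2))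
          + (γ ^ 2 / 4) * (ℓ * Real.exp (γ * c / 2)) ^ 2) *
        Complex.exp (-(a * Real.exp (γ * c)) - ℓ * Real.exp (γ * c / 2)) := by
  have hI₁ := integrable_cexp_mul_zeroModeWeight hγ ha hℓ (t := s + γ) (by positivity)
  have hI₂ := integrable_cexp_mul_zeroModeWeight hγ ha hℓ (t := s + γ / 2 + γ) (by positivity)
  have hA := hI₁.const_mul ((γ * (s + γ / 2) * a : ℂ))
  have hB := hI₂.const_mul ((γ ^ 2 / 2 * a * ℓ : ℂ))
  have hC := hI₁.const_mul ((γ ^ 2 / 4 * ℓ ^ 2 : ℂ))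
  simp only [cexp_mul_zeroModeIntegrand_eq]
  refine ⟨integrable_cexp_mul_zeroModeWeight hγ ha hℓ hs, (hA.add hB).add hC, ?_⟩
  rw [integral_add, integral_add, integral_const_mul, integral_const_mul, integral_const_mul]
  · exact mul_add_half_mul_zeroModeMoment hγ ha hℓ hs
  · exact hA
  · exact hB
  · exact hA.add hB
  · exact hC
end

section
/- Let γ > 0 be real, let s ∈ (−γ/2, 0), let a > 0 be real, and let ℓ ∈ ℂ satisfy Re ℓ ≥ 0. Then the function c ↦ e^{sc}·(exp(−a e^{γc} − ℓ e^{γc/2}) − 1) is Lebesgue integrable on ℝ, the right-hand side below is absolutely convergent, and s(s+γ/2) · ∫_ℝ e^{sc} ( exp(−a e^{γc} − ℓ e^{γc/2}) − 1 ) dc = ∫_ℝ e^{sc} ( γ(s+γ/2)·a e^{γc} + (γ²/2)·(a e^{γc})·(ℓ e^{γc/2}) + (γ²/4)·(ℓ e^{γc/2})² ) exp(−a e^{γc} − ℓ e^{γc/2}) dc. -/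
/-!
Substitute `u = e^{γc/2}`. Both integrands have the form `e^{sc} φ(u)` with `φ = O(u)` as `u → 0`
and `φ` bounded as `u → ∞`; for `-γ/2 < s < 0` such a function is integrable on `ℝ` and tends to
`0` at `±∞`. With `E(u) = exp(-a u² - ℓ u)`, the function `e^{sc} ψ(u)` where
`ψ(u) = (s + γ/2)(E(u) - 1) + (γ/2) ℓ u E(u)` is of the same form, and its derivative in `c` is
`s(s + γ/2)` times the first integrand minus the second. Integrating this derivative over `ℝ`
gives `0`, which is the identity.
-/

open MeasureTheory Filter Asymptotics
open scoped Topology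

noncomputable def zeroMode (s κ : ℝ) (φ : ℝ → ℂ) (c : ℝ) : ℂ :=
  Complex.exp (s * c) * φ (Real.exp (κ * c))

def zeroModeProfiles : Submodule ℂ (ℝ → ℂ) where
  carrier :=
    {φ | Continuous φ ∧ φ =O[𝓝 0] (fun u : ℝ => (u : ℂ)) ∧ φ =O[atTop] (fun _ => (1 : ℂ))}
  add_mem' := fun ⟨hc, h0, h1⟩ ⟨hc', h0', h1'⟩ => ⟨hc.add hc', h0.add h0', h1.add h1'⟩
  zero_mem' := ⟨continuous_const, isBigO_zero _ _, isBigO_zero _ _⟩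
  smul_mem' := fun c _ ⟨hc, h0, h1⟩ =>
    ⟨hc.const_smul c, h0.const_smul_left c, h1.const_smul_left c⟩

section ZeroMode

variable {s κ : ℝ} {φ : ℝ → ℂ}

theorem zeroMode_isBigO_atBot (hκ : 0 < κ) (hφ : φ =O[𝓝 0] (fun u : ℝ => (u : ℂ))) :
    zeroMode s κ φ =O[atBot] fun c => Real.exp ((s + κ) * c) := by
  have hu : Tendsto (fun c => Real.exp (κ * c)) atBot (𝓝 0) :=
    Real.tendsto_exp_atBot.comp (tendsto_id.const_mul_atBot hκ)
  refine ((isBigO_refl (fun c : ℝ => Complex.exp (s * c)) atBot).mul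
    (hφ.comp_tendsto hu)).trans (isBigO_of_le _ fun c => ?_)
  simp [Complex.norm_exp, ← Real.exp_add, add_mul]

theorem zeroMode_isBigO_atTop (hκ : 0 < κ) (hφ : φ =O[atTop] (fun _ => (1 : ℂ))) :
    zeroMode s κ φ =O[atTop] fun c => Real.exp (s * c) := by
  have hu : Tendsto (fun c => Real.exp (κ * c)) atTop atTop :=
    Real.tendsto_exp_atTop.comp (tendsto_id.const_mul_atTop hκ)
  refine ((isBigO_refl (fun c : ℝ => Complex.exp (s * c)) atTop).mul
    (hφ.comp_tendsto hu)).trans (isBigO_of_le _ fun c => ?_)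
  simp [Complex.norm_exp]

theorem integrable_zeroMode (hs : s < 0) (hsκ : 0 < s + κ) (hφ : φ ∈ zeroModeProfiles) :
    Integrable (zeroMode s κ φ) := by
  obtain ⟨hc, h0, h1⟩ := hφ
  have hκ : 0 < κ := by linarith
  have hcont : Continuous (zeroMode s κ φ) := by unfold zeroMode; fun_prop
  exact hcont.locallyIntegrable.integrable_of_isBigO_atBot_atTop
    (zeroMode_isBigO_atBot hκ h0) ⟨_, Iic_mem_atBot 0, integrableOn_exp_mul_Iic hsκ 0⟩
    (zeroMode_isBigO_atTop hκ h1) ⟨_, Ioi_mem_atTop 0, integrableOn_exp_mul_Ioi hs 0⟩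

theorem tendsto_zeroMode_atBot (hκ : 0 < κ) (hsκ : 0 < s + κ)
    (hφ : φ =O[𝓝 0] (fun u : ℝ => (u : ℂ))) :
    Tendsto (zeroMode s κ φ) atBot (𝓝 0) :=
  (zeroMode_isBigO_atBot hκ hφ).trans_tendsto
    (Real.tendsto_exp_atBot.comp (tendsto_id.const_mul_atBot hsκ))

theorem tendsto_zeroMode_atTop (hκ : 0 < κ) (hs : s < 0) (hφ : φ =O[atTop] (fun _ => (1 : ℂ))) :
    Tendsto (zeroMode s κ φ) atTop (𝓝 0) :=
  (zeroMode_isBigO_atTop hκ hφ).trans_tendsto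
    (Real.tendsto_exp_atBot.comp (tendsto_id.const_mul_atTop_of_neg hs))

theorem hasDerivAt_zeroMode {φ' : ℂ} {c : ℝ} (hφ : HasDerivAt φ φ' (Real.exp (κ * c))) :
    HasDerivAt (zeroMode s κ φ)
      (Complex.exp (s * c) * (s * φ (Real.exp (κ * c)) + κ * Real.exp (κ * c) * φ')) c := by
  have hu : HasDerivAt (fun c => Real.exp (κ * c)) (κ * Real.exp (κ * c)) c := by
    simpa [mul_comm] using ((hasDerivAt_id c).const_mul κ).exp
  have he : HasDerivAt (fun c : ℝ => Complex.exp (s * c)) (s * Complex.exp (s * c)) c := by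
    simpa [mul_comm] using (((hasDerivAt_id c).const_mul s).ofReal_comp).cexp
  refine (he.mul (hφ.scomp c hu)).congr_deriv ?_
  simp only [Function.comp_apply, Complex.real_smul]
  push_cast
  ring

end ZeroMode

theorem Real.exp_mul_eq_exp_half_mul_sq (γ c : ℝ) :
    Real.exp (γ * c) = Real.exp (γ / 2 * c) ^ 2 := by
  rw [← Real.exp_nat_mul]; ring_nf

noncomputable def expNegQuad (a : ℝ) (ℓ : ℂ) (u : ℝ) : ℂ :=
  Complex.exp (-(a * (u : ℂ) ^ 2) - ℓ * u)

section ExpNegQuad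

variable {a : ℝ} {ℓ : ℂ}

@[fun_prop]
theorem continuous_expNegQuad : Continuous (expNegQuad a ℓ) := by
  unfold expNegQuad; fun_prop

theorem hasDerivAt_expNegQuad (u : ℝ) :
    HasDerivAt (expNegQuad a ℓ) ((-(2 * a * u) - ℓ) * expNegQuad a ℓ u) u := by
  have hu : HasDerivAt (fun u : ℝ => (u : ℂ)) 1 u := (hasDerivAt_id u).ofReal_comp
  refine ((((hu.pow 2).const_mul (a : ℂ)).neg.sub (hu.const_mul ℓ)).cexp).congr_deriv ?_
  simp only [Pi.neg_apply, Pi.sub_apply, Pi.pow_apply, expNegQuad]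
  ring

theorem norm_expNegQuad_le {u : ℝ} (hℓ : 0 ≤ ℓ.re) (hu : 0 ≤ u) :
    ‖expNegQuad a ℓ u‖ ≤ Real.exp (-(a * u ^ 2)) := by
  rw [expNegQuad, Complex.norm_exp, Real.exp_le_exp]
  have : 0 ≤ ℓ.re * u := mul_nonneg hℓ hu
  simp only [← Complex.ofReal_pow, Complex.sub_re, Complex.neg_re, Complex.mul_re,
    Complex.ofReal_re, Complex.ofReal_im]
  linarith

theorem norm_expNegQuad_le_one {u : ℝ} (ha : 0 ≤ a) (hℓ : 0 ≤ ℓ.re) (hu : 0 ≤ u) :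
    ‖expNegQuad a ℓ u‖ ≤ 1 :=
  (norm_expNegQuad_le hℓ hu).trans (Real.exp_le_one_iff.2 (by nlinarith [sq_nonneg u]))

theorem tendsto_pow_mul_expNegQuad_atTop (ha : 0 < a) (hℓ : 0 ≤ ℓ.re) (k : ℕ) :
    Tendsto (fun u : ℝ => (u : ℂ) ^ k * expNegQuad a ℓ u) atTop (𝓝 0) := by
  have hdecay : Tendsto (fun u : ℝ => u ^ k * Real.exp (-a * u)) atTop (𝓝 0) := by
    simpa [Real.rpow_natCast] using tendsto_rpow_mul_exp_neg_mul_atTop_nhds_zero k a ha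
  refine squeeze_zero_norm' ?_ hdecay
  filter_upwards [eventually_ge_atTop 1] with u hu
  rw [norm_mul, norm_pow, Complex.norm_real, Real.norm_of_nonneg (by linarith)]
  gcongr
  refine (norm_expNegQuad_le hℓ (by linarith)).trans (Real.exp_le_exp.2 ?_)
  nlinarith [mul_le_mul_of_nonneg_left (show u ≤ u ^ 2 by nlinarith) ha.le]

theorem expNegQuad_sub_one_mem (ha : 0 ≤ a) (hℓ : 0 ≤ ℓ.re) :
    (fun u => expNegQuad a ℓ u - 1) ∈ zeroModeProfiles := by
  refine ⟨continuous_expNegQuad.sub continuous_const, ?_, ?_⟩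
  · have h := (hasDerivAt_expNegQuad (a := a) (ℓ := ℓ) 0).isBigO_sub
    rw [show expNegQuad a ℓ 0 = 1 by simp [expNegQuad]] at h
    exact h.trans (isBigO_of_le _ fun u => by simp)
  · refine IsBigO.of_bound 2 ?_
    filter_upwards [eventually_ge_atTop 0] with u hu
    calc ‖expNegQuad a ℓ u - 1‖ ≤ ‖expNegQuad a ℓ u‖ + ‖(1 : ℂ)‖ := norm_sub_le _ _
      _ ≤ 2 * ‖(1 : ℂ)‖ := by rw [norm_one]; linarith [norm_expNegQuad_le_one ha hℓ hu]

theorem pow_mul_expNegQuad_mem (ha : 0 < a) (hℓ : 0 ≤ ℓ.re) {k : ℕ} (hk : k ≠ 0) :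
    (fun u : ℝ => (u : ℂ) ^ k * expNegQuad a ℓ u) ∈ zeroModeProfiles := by
  refine ⟨by fun_prop, ?_, (tendsto_pow_mul_expNegQuad_atTop ha hℓ k).isBigO_one ℂ⟩
  obtain ⟨j, rfl⟩ := Nat.exists_eq_succ_of_ne_zero hk
  have hj : (fun u : ℝ => (u : ℂ) ^ j * expNegQuad a ℓ u) =O[𝓝 0] (fun _ => (1 : ℂ)) :=
    ((by fun_prop : Continuous fun u : ℝ => (u : ℂ) ^ j * expNegQuad a ℓ u).tendsto 0).isBigO_one ℂ
  simpa [pow_succ, mul_comm, mul_left_comm, mul_assoc] using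
    (isBigO_refl (fun u : ℝ => (u : ℂ)) (𝓝 0)).mul hj

end ExpNegQuad

noncomputable def ibpIntegrand (γ s a : ℝ) (ℓ : ℂ) (u : ℝ) : ℂ :=
  ((γ * (s + γ / 2)) * (a * (u : ℂ) ^ 2) + (γ ^ 2 / 2) * ((a : ℂ) * (u : ℂ) ^ 2) * (ℓ * u)
    + (γ ^ 2 / 4) * (ℓ * u) ^ 2) * expNegQuad a ℓ u

noncomputable def ibpPrimitive (γ s a : ℝ) (ℓ : ℂ) (u : ℝ) : ℂ :=
  (s + γ / 2) * (expNegQuad a ℓ u - 1) + γ / 2 * ℓ * (u * expNegQuad a ℓ u)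

section LiouvilleProfiles

variable {γ s a : ℝ} {ℓ : ℂ}

theorem ibpIntegrand_mem (ha : 0 < a) (hℓ : 0 ≤ ℓ.re) :
    ibpIntegrand γ s a ℓ ∈ zeroModeProfiles := by
  have h : ibpIntegrand γ s a ℓ =
      (γ * (s + γ / 2) * a + γ ^ 2 / 4 * ℓ ^ 2 : ℂ) • (fun u : ℝ => (u : ℂ) ^ 2 * expNegQuad a ℓ u)
        + (γ ^ 2 / 2 * a * ℓ : ℂ) • (fun u : ℝ => (u : ℂ) ^ 3 * expNegQuad a ℓ u) := by
    funext u
    simp only [ibpIntegrand, Pi.add_apply, Pi.smul_apply, smul_eq_mul]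
    ring
  rw [h]
  exact add_mem (Submodule.smul_mem _ _ (pow_mul_expNegQuad_mem ha hℓ two_ne_zero))
    (Submodule.smul_mem _ _ (pow_mul_expNegQuad_mem ha hℓ three_ne_zero))

theorem ibpPrimitive_mem (ha : 0 < a) (hℓ : 0 ≤ ℓ.re) :
    ibpPrimitive γ s a ℓ ∈ zeroModeProfiles := by
  have h : ibpPrimitive γ s a ℓ =
      (s + γ / 2 : ℂ) • (fun u => expNegQuad a ℓ u - 1)
        + (γ / 2 * ℓ : ℂ) • (fun u : ℝ => (u : ℂ) ^ 1 * expNegQuad a ℓ u) := by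
    funext u
    simp only [ibpPrimitive, pow_one, Pi.add_apply, Pi.smul_apply, smul_eq_mul]
  rw [h]
  exact add_mem (Submodule.smul_mem _ _ (expNegQuad_sub_one_mem ha.le hℓ))
    (Submodule.smul_mem _ _ (pow_mul_expNegQuad_mem ha hℓ one_ne_zero))

theorem hasDerivAt_ibpPrimitive (u : ℝ) :
    HasDerivAt (ibpPrimitive γ s a ℓ) ((s + γ / 2) * ((-(2 * a * u) - ℓ) * expNegQuad a ℓ u)
      + γ / 2 * ℓ * (expNegQuad a ℓ u + u * ((-(2 * a * u) - ℓ) * expNegQuad a ℓ u))) u := by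
  have hE := hasDerivAt_expNegQuad (a := a) (ℓ := ℓ) u
  have hu : HasDerivAt (fun u : ℝ => (u : ℂ)) 1 u := (hasDerivAt_id u).ofReal_comp
  exact (((hE.sub_const 1).const_mul ((s : ℂ) + γ / 2)).add
    ((hu.mul hE).const_mul ((γ : ℂ) / 2 * ℓ))).congr_deriv (by ring)

theorem hasDerivAt_zeroMode_ibpPrimitive (c : ℝ) :
    HasDerivAt (zeroMode s (γ / 2) (ibpPrimitive γ s a ℓ))
      (s * (s + γ / 2) * zeroMode s (γ / 2) (fun u => expNegQuad a ℓ u - 1) c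
        - zeroMode s (γ / 2) (ibpIntegrand γ s a ℓ) c) c := by
  refine (hasDerivAt_zeroMode (hasDerivAt_ibpPrimitive _)).congr_deriv ?_
  simp only [zeroMode, ibpPrimitive, ibpIntegrand, Complex.ofReal_div, Complex.ofReal_ofNat]
  ring

theorem zeroMode_expNegQuad_sub_one :
    zeroMode s (γ / 2) (fun u => expNegQuad a ℓ u - 1) = fun c : ℝ =>
      Complex.exp (s * c) *
        (Complex.exp (-(a * Real.exp (γ * c)) - ℓ * Real.exp (γ * c / 2)) - 1) := by
  funext c
  simp only [zeroMode, expNegQuad, Real.exp_mul_eq_exp_half_mul_sq, div_mul_eq_mul_div]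
  push_cast
  ring_nf

theorem zeroMode_ibpIntegrand :
    zeroMode s (γ / 2) (ibpIntegrand γ s a ℓ) = fun c : ℝ =>
      Complex.exp (s * c) *
        ((γ * (s + γ / 2)) * (a * Real.exp (γ * c))
          + (γ ^ 2 / 2) * ((a : ℂ) * Real.exp (γ * c)) * (ℓ * Real.exp (γ * c / 2))
          + (γ ^ 2 / 4) * (ℓ * Real.exp (γ * c / 2)) ^ 2) *
        Complex.exp (-(a * Real.exp (γ * c)) - ℓ * Real.exp (γ * c / 2)) := by
  funext c
  simp only [zeroMode, ibpIntegrand, expNegQuad, Real.exp_mul_eq_exp_half_mul_sq,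
    div_mul_eq_mul_div]
  push_cast
  ring_nf

end LiouvilleProfiles

/-- Once-truncated double integration-by-parts identity in the zero mode `c` underlying the
truncated definition `s(s+γ/2)·R = R̂` of the boundary reflection coefficient of Liouville CFT
(Lemma 2.13 of the paper). -/
theorem liouville_zero_mode_ibp_truncated (γ s a : ℝ) (hγ : 0 < γ)
    (hs : s ∈ Set.Ioo (-(γ / 2)) 0) (ha : 0 < a) (ℓ : ℂ) (hℓ : 0 ≤ ℓ.re) :
    Integrable (fun c : ℝ =>
      Complex.exp (s * c) *
        (Complex.exp (-(a * Real.exp (γ * c)) - ℓ * Real.exp (γ * c / 2)) - 1)) ∧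
    Integrable (fun c : ℝ =>
      Complex.exp (s * c) *
        ((γ * (s + γ / 2)) * (a * Real.exp (γ * c))
          + (γ ^ 2 / 2) * ((a : ℂ) * Real.exp (γ * c)) * (ℓ * Real.exp (γ * c / 2))
          + (γ ^ 2 / 4) * (ℓ * Real.exp (γ * c / 2)) ^ 2) *
        Complex.exp (-(a * Real.exp (γ * c)) - ℓ * Real.exp (γ * c / 2))) ∧
    ((s : ℂ) * (s + γ / 2)) *
        ∫ c : ℝ, Complex.exp (s * c) *
          (Complex.exp (-(a * Real.exp (γ * c)) - ℓ * Real.exp (γ * c / 2)) - 1) =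
      ∫ c : ℝ, Complex.exp (s * c) *
        ((γ * (s + γ / 2)) * (a * Real.exp (γ * c))
          + (γ ^ 2 / 2) * ((a : ℂ) * Real.exp (γ * c)) * (ℓ * Real.exp (γ * c / 2))
          + (γ ^ 2 / 4) * (ℓ * Real.exp (γ * c / 2)) ^ 2) *
        Complex.exp (-(a * Real.exp (γ * c)) - ℓ * Real.exp (γ * c / 2)) := by
  obtain ⟨hs_lo, hs_hi⟩ := hs
  have hκ : 0 < γ / 2 := half_pos hγ
  have hsκ : 0 < s + γ / 2 := by linarith
  rw [← zeroMode_expNegQuad_sub_one, ← zeroMode_ibpIntegrand]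
  have hF := integrable_zeroMode hs_hi hsκ (expNegQuad_sub_one_mem ha.le hℓ)
  have hG := integrable_zeroMode hs_hi hsκ (ibpIntegrand_mem (γ := γ) (s := s) ha hℓ)
  refine ⟨hF, hG, ?_⟩
  obtain ⟨-, hψ₀, hψ_top⟩ := ibpPrimitive_mem (γ := γ) (s := s) ha hℓ
  have hFTC := integral_of_hasDerivAt_of_tendsto hasDerivAt_zeroMode_ibpPrimitive
    ((hF.const_mul _).sub hG) (tendsto_zeroMode_atBot hκ hsκ hψ₀)
    (tendsto_zeroMode_atTop hκ hs_hi hψ_top)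
  rwa [sub_self, integral_sub (hF.const_mul _) hG, integral_const_mul, sub_eq_zero] at hFTC
end

section
/- Let γ > 0 be real, let s ∈ (−γ, −γ/2), let a > 0 be real, and let ℓ ∈ ℂ satisfy Re ℓ ≥ 0. Then the function c ↦ e^{sc}·(exp(−a e^{γc} − ℓ e^{γc/2}) − 1 + ℓ e^{γc/2}) is Lebesgue integrable on ℝ, the right-hand side below is absolutely convergent, and s(s+γ/2) · ∫_ℝ e^{sc} ( exp(−a e^{γc} − ℓ e^{γc/2}) − 1 + ℓ e^{γc/2} ) dc = ∫_ℝ e^{sc} ( γ(s+γ/2)·a e^{γc} + (γ²/2)·(a e^{γc})·(ℓ e^{γc/2}) + (γ²/4)·(ℓ e^{γc/2})² ) exp(−a e^{γc} − ℓ e^{γc/2}) dc. -/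
/-!
Write `u = a e^{γc}`, `v = ℓ e^{γc/2}` (`bulk`, `boundary`), `E = e^{-u-v}` (`boltzmann`),
`F = E - 1 + v` (`twiceTruncated`) and `G = v (E - 1)` (`boundaryMulTruncated`).
From `u' = γ u` and `v' = (γ/2) v` one gets `F' = -(γ u E + (γ/2) G)` and
`G' = (γ/2) G - (γ u v + (γ/2) v²) E`, so integrating `e^{sc} F'` and `e^{sc} G'` by parts gives
`s ∫ e^{sc} F = γ ∫ e^{sc} u E + (γ/2) ∫ e^{sc} G` and
`(s + γ/2) ∫ e^{sc} G = ∫ e^{sc} (γ u v + (γ/2) v²) E`; eliminating `∫ e^{sc} G` is the identity.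

All integrals converge because `Re (u + v) ≥ 0`: then `|e^{-w} - 1| ≤ |w|` and
`|e^{-w} - 1 + w| ≤ |w|²` make `F` and `G` of order `e^{γc}` as `c → -∞`, which `s > -γ` absorbs,
while they are `O(e^{γc/2})` as `c → +∞`, which `s < -γ/2` absorbs; the terms carrying `E`
decay doubly exponentially.
-/

open MeasureTheory Set
open scoped Real Complex

theorem Complex.norm_exp_neg_le_one {w : ℂ} (hw : 0 ≤ w.re) : ‖cexp (-w)‖ ≤ 1 := by
  rw [Complex.norm_exp, Complex.neg_re, Real.exp_le_one_iff]
  linarith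

theorem Complex.hasDerivAt_ofReal_mul (w : ℂ) (t : ℝ) :
    HasDerivAt (fun t : ℝ => (t : ℂ) * w) w t := by
  simpa using (hasDerivAt_id t).ofReal_comp.mul_const w

theorem Complex.norm_exp_neg_sub_one_le {w : ℂ} (hw : 0 ≤ w.re) : ‖cexp (-w) - 1‖ ≤ ‖w‖ := by
  have hbound (t : ℝ) (ht : t ∈ Ico (0 : ℝ) 1) : ‖cexp (t * -w) * -w‖ ≤ ‖w‖ := by
    rw [norm_mul, norm_neg, mul_neg]
    refine mul_le_of_le_one_left (norm_nonneg w) (Complex.norm_exp_neg_le_one ?_)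
    simpa using mul_nonneg ht.1 hw
  simpa using norm_image_sub_le_of_norm_deriv_le_segment_01'
    (fun t _ => (Complex.hasDerivAt_ofReal_mul (-w) t).cexp.hasDerivWithinAt) hbound

theorem Complex.norm_exp_neg_sub_one_add_le {w : ℂ} (hw : 0 ≤ w.re) :
    ‖cexp (-w) - 1 + w‖ ≤ ‖w‖ ^ 2 := by
  have hderiv (t : ℝ) :
      HasDerivAt (fun t : ℝ => cexp (t * -w) + t * w) (cexp (t * -w) * -w + w) t :=
    (Complex.hasDerivAt_ofReal_mul (-w) t).cexp.add (Complex.hasDerivAt_ofReal_mul w t)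
  have hbound (t : ℝ) (ht : t ∈ Ico (0 : ℝ) 1) : ‖cexp (t * -w) * -w + w‖ ≤ ‖w‖ ^ 2 := by
    have htw : 0 ≤ ((t : ℂ) * w).re := by simpa using mul_nonneg ht.1 hw
    calc ‖cexp (t * -w) * -w + w‖ = ‖w‖ * ‖cexp (-(t * w)) - 1‖ := by
          rw [← norm_mul, ← norm_neg]; congr 1; simp only [mul_neg]; ring
      _ ≤ ‖w‖ * ‖(t : ℂ) * w‖ := by gcongr; exact Complex.norm_exp_neg_sub_one_le htw
      _ ≤ ‖w‖ * ‖w‖ := by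
          gcongr
          rw [norm_mul, Complex.norm_real, Real.norm_of_nonneg ht.1]
          exact mul_le_of_le_one_left (norm_nonneg w) ht.2.le
      _ = ‖w‖ ^ 2 := (sq _).symm
  simpa [sub_add_eq_add_sub] using norm_image_sub_le_of_norm_deriv_le_segment_01'
    (fun t _ => (hderiv t).hasDerivWithinAt) hbound

theorem Real.exp_neg_le_two_div_sq {x : ℝ} (hx : 0 < x) : rexp (-x) ≤ 2 / x ^ 2 := by
  rw [Real.exp_neg, inv_le_comm₀ (Real.exp_pos x) (by positivity), inv_div]
  nlinarith [Real.quadratic_le_exp_of_nonneg hx.le]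

theorem Real.exp_div_two_sq (x : ℝ) : rexp (x / 2) ^ 2 = rexp x := by
  rw [Real.exp_half, Real.sq_sqrt (Real.exp_pos x).le]

theorem integrable_cexp_mul_of_norm_le {f : ℝ → ℂ} (hf : Continuous f) {s p q C₁ C₂ : ℝ}
    (hp : 0 < s + p) (hq : s + q < 0)
    (hf₁ : ∀ c ≤ 0, ‖f c‖ ≤ C₁ * rexp (p * c)) (hf₂ : ∀ c, 0 ≤ c → ‖f c‖ ≤ C₂ * rexp (q * c)) :
    Integrable fun c : ℝ => cexp (s * c) * f c := by
  have hweight {C r c : ℝ} (h : ‖f c‖ ≤ C * rexp (r * c)) :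
      ‖cexp (s * c) * f c‖ ≤ C * rexp ((s + r) * c) := by
    rw [norm_mul, ← Complex.ofReal_mul, Complex.norm_exp_ofReal, add_mul, Real.exp_add]
    calc rexp (s * c) * ‖f c‖ ≤ rexp (s * c) * (C * rexp (r * c)) := by gcongr
      _ = C * (rexp (s * c) * rexp (r * c)) := by ring
  rw [← integrableOn_univ, ← Iic_union_Ioi (a := (0 : ℝ))]
  have hmeas : AEStronglyMeasurable (fun c : ℝ => cexp (s * c) * f c) := by
    fun_prop
  refine IntegrableOn.union ?_ ?_
  · refine ((integrableOn_exp_mul_Iic hp 0).const_mul C₁).mono' hmeas.restrict ?_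
    exact (ae_restrict_iff' measurableSet_Iic).2 (.of_forall fun c hc => hweight (hf₁ c hc))
  · refine ((integrableOn_exp_mul_Ioi hq 0).const_mul C₂).mono' hmeas.restrict ?_
    exact (ae_restrict_iff' measurableSet_Ioi).2 (.of_forall fun c hc => hweight (hf₂ c hc.le))

theorem integral_cexp_mul_deriv {s : ℂ} {f f' : ℝ → ℂ} (hf : ∀ c, HasDerivAt f (f' c) c)
    (hint : Integrable fun c : ℝ => cexp (s * c) * f c)
    (hint' : Integrable fun c : ℝ => cexp (s * c) * f' c) :
    ∫ c : ℝ, cexp (s * c) * f' c = -(s * ∫ c : ℝ, cexp (s * c) * f c) := by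
  have hweight (c : ℝ) : HasDerivAt (fun c : ℝ => cexp (s * c)) (s * cexp (s * c)) c := by
    simpa [mul_comm] using ((hasDerivAt_id c).ofReal_comp.const_mul s).cexp
  rw [integral_mul_deriv_eq_deriv_mul_of_integrable (fun c _ => hweight c) (fun c _ => hf c)
    hint' (by simpa only [Pi.mul_def, mul_assoc] using hint.const_mul s) hint, ← integral_const_mul]
  simp only [mul_assoc]

namespace LiouvilleZeroMode

noncomputable def bulk (γ a c : ℝ) : ℂ := a * rexp (γ * c)

noncomputable def boundary (γ : ℝ) (ℓ : ℂ) (c : ℝ) : ℂ := ℓ * rexp (γ * c / 2)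

noncomputable def boltzmann (γ a : ℝ) (ℓ : ℂ) (c : ℝ) : ℂ := cexp (-bulk γ a c - boundary γ ℓ c)

noncomputable def twiceTruncated (γ a : ℝ) (ℓ : ℂ) (c : ℝ) : ℂ :=
  boltzmann γ a ℓ c - 1 + boundary γ ℓ c

noncomputable def boundaryMulTruncated (γ a : ℝ) (ℓ : ℂ) (c : ℝ) : ℂ :=
  boundary γ ℓ c * (boltzmann γ a ℓ c - 1)

variable {γ a : ℝ} {ℓ : ℂ}

theorem hasDerivAt_bulk (c : ℝ) : HasDerivAt (bulk γ a) (γ * bulk γ a c) c :=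
  ((((hasDerivAt_id c).const_mul γ).exp.ofReal_comp).const_mul (a : ℂ)).congr_deriv <| by
    simp only [bulk, id]
    push_cast
    ring

theorem hasDerivAt_boundary (c : ℝ) :
    HasDerivAt (boundary γ ℓ) (γ / 2 * boundary γ ℓ c) c :=
  (((((hasDerivAt_id c).const_mul γ).div_const 2).exp.ofReal_comp).const_mul ℓ).congr_deriv <| by
    simp only [boundary, id]
    push_cast
    ring

theorem hasDerivAt_boltzmann (c : ℝ) :
    HasDerivAt (boltzmann γ a ℓ)
      (-(γ * bulk γ a c + γ / 2 * boundary γ ℓ c) * boltzmann γ a ℓ c) c :=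
  ((hasDerivAt_bulk c).neg.sub (hasDerivAt_boundary c)).cexp.congr_deriv <| by
    simp only [boltzmann, Pi.sub_apply, Pi.neg_apply]
    ring

theorem hasDerivAt_twiceTruncated (c : ℝ) :
    HasDerivAt (twiceTruncated γ a ℓ)
      (-(γ * (bulk γ a c * boltzmann γ a ℓ c) + γ / 2 * boundaryMulTruncated γ a ℓ c)) c :=
  (((hasDerivAt_boltzmann c).sub_const 1).add (hasDerivAt_boundary c)).congr_deriv <| by
    simp only [boundaryMulTruncated]
    ring

theorem hasDerivAt_boundaryMulTruncated (c : ℝ) :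
    HasDerivAt (boundaryMulTruncated γ a ℓ)
      (γ / 2 * boundaryMulTruncated γ a ℓ c -
        (γ * (bulk γ a c * boundary γ ℓ c * boltzmann γ a ℓ c) +
          γ / 2 * (boundary γ ℓ c ^ 2 * boltzmann γ a ℓ c))) c :=
  ((hasDerivAt_boundary c).mul ((hasDerivAt_boltzmann c).sub_const 1)).congr_deriv <| by
    simp only [boundaryMulTruncated]
    ring

theorem continuous_bulk : Continuous (bulk γ a) := by
  unfold bulk; fun_prop

theorem continuous_boundary : Continuous (boundary γ ℓ) := by
  unfold boundary; fun_prop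

theorem continuous_boltzmann : Continuous (boltzmann γ a ℓ) :=
  (continuous_bulk.neg.sub continuous_boundary).cexp

theorem norm_bulk (ha : 0 ≤ a) (c : ℝ) : ‖bulk γ a c‖ = a * rexp (γ * c) := by
  rw [bulk, norm_mul, Complex.norm_real, Complex.norm_real, Real.norm_of_nonneg ha,
    Real.norm_of_nonneg (Real.exp_pos _).le]

theorem norm_boundary (c : ℝ) : ‖boundary γ ℓ c‖ = ‖ℓ‖ * rexp (γ * c / 2) := by
  rw [boundary, norm_mul, Complex.norm_real, Real.norm_of_nonneg (Real.exp_pos _).le]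

theorem re_bulk_add_boundary_nonneg (ha : 0 ≤ a) (hℓ : 0 ≤ ℓ.re) (c : ℝ) :
    0 ≤ (bulk γ a c + boundary γ ℓ c).re := by
  simp only [bulk, boundary, Complex.add_re, Complex.mul_re,
    Complex.ofReal_re, Complex.ofReal_im, mul_zero, sub_zero]
  positivity

theorem boltzmann_eq (c : ℝ) : boltzmann γ a ℓ c = cexp (-(bulk γ a c + boundary γ ℓ c)) := by
  rw [boltzmann, neg_add']

theorem norm_boltzmann_le (hℓ : 0 ≤ ℓ.re) (c : ℝ) :
    ‖boltzmann γ a ℓ c‖ ≤ rexp (-(a * rexp (γ * c))) := by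
  rw [boltzmann, Complex.norm_exp, Real.exp_le_exp]
  simp only [bulk, boundary, Complex.sub_re, Complex.neg_re, Complex.mul_re, Complex.ofReal_re,
    Complex.ofReal_im, mul_zero, sub_zero]
  linarith [mul_nonneg hℓ (Real.exp_pos (γ * c / 2)).le]

theorem norm_boltzmann_le_one (ha : 0 ≤ a) (hℓ : 0 ≤ ℓ.re) (c : ℝ) : ‖boltzmann γ a ℓ c‖ ≤ 1 :=
  boltzmann_eq (γ := γ) c ▸ Complex.norm_exp_neg_le_one (re_bulk_add_boundary_nonneg ha hℓ c)

theorem norm_bulk_add_boundary_le (hγ : 0 ≤ γ) (ha : 0 ≤ a) {c : ℝ} (hc : c ≤ 0) :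
    ‖bulk γ a c + boundary γ ℓ c‖ ≤ (a + ‖ℓ‖) * rexp (γ * c / 2) := by
  have hexp : rexp (γ * c) ≤ rexp (γ * c / 2) := Real.exp_le_exp.2 (by nlinarith)
  calc ‖bulk γ a c + boundary γ ℓ c‖ ≤ a * rexp (γ * c) + ‖ℓ‖ * rexp (γ * c / 2) := by
        rw [← norm_bulk ha, ← norm_boundary]; exact norm_add_le _ _
    _ ≤ (a + ‖ℓ‖) * rexp (γ * c / 2) := by rw [add_mul]; gcongr

theorem norm_twiceTruncated_le_of_nonpos (hγ : 0 ≤ γ) (ha : 0 ≤ a) (hℓ : 0 ≤ ℓ.re) {c : ℝ}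
    (hc : c ≤ 0) : ‖twiceTruncated γ a ℓ c‖ ≤ ((a + ‖ℓ‖) ^ 2 + a) * rexp (γ * c) := by
  set w := bulk γ a c + boundary γ ℓ c
  have hsplit : twiceTruncated γ a ℓ c = (cexp (-w) - 1 + w) - bulk γ a c := by
    rw [twiceTruncated, boltzmann_eq]; ring
  calc ‖twiceTruncated γ a ℓ c‖ ≤ ‖w‖ ^ 2 + a * rexp (γ * c) := by
        rw [hsplit, ← norm_bulk ha]
        refine (norm_sub_le _ _).trans ?_
        gcongr
        exact Complex.norm_exp_neg_sub_one_add_le (re_bulk_add_boundary_nonneg ha hℓ c)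
    _ ≤ ((a + ‖ℓ‖) * rexp (γ * c / 2)) ^ 2 + a * rexp (γ * c) := by
        gcongr; exact norm_bulk_add_boundary_le hγ ha hc
    _ = ((a + ‖ℓ‖) ^ 2 + a) * rexp (γ * c) := by rw [mul_pow, Real.exp_div_two_sq]; ring

theorem norm_twiceTruncated_le_of_nonneg (hγ : 0 ≤ γ) (ha : 0 ≤ a) (hℓ : 0 ≤ ℓ.re) {c : ℝ}
    (hc : 0 ≤ c) : ‖twiceTruncated γ a ℓ c‖ ≤ (2 + ‖ℓ‖) * rexp (γ / 2 * c) := by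
  have hexp : 1 ≤ rexp (γ / 2 * c) := Real.one_le_exp (by positivity)
  calc ‖twiceTruncated γ a ℓ c‖ ≤ ‖boltzmann γ a ℓ c‖ + ‖(-1 : ℂ)‖ + ‖boundary γ ℓ c‖ := by
        rw [twiceTruncated, sub_eq_add_neg]; exact norm_add₃_le
    _ ≤ 1 + 1 + ‖ℓ‖ * rexp (γ / 2 * c) := by
        rw [norm_neg, norm_one, norm_boundary, mul_div_right_comm]
        gcongr
        exact norm_boltzmann_le_one ha hℓ c
    _ ≤ (2 + ‖ℓ‖) * rexp (γ / 2 * c) := by nlinarith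

theorem norm_boundaryMulTruncated_le_of_nonpos (hγ : 0 ≤ γ) (ha : 0 ≤ a) (hℓ : 0 ≤ ℓ.re) {c : ℝ}
    (hc : c ≤ 0) : ‖boundaryMulTruncated γ a ℓ c‖ ≤ ‖ℓ‖ * (a + ‖ℓ‖) * rexp (γ * c) := by
  calc ‖boundaryMulTruncated γ a ℓ c‖
      = ‖ℓ‖ * rexp (γ * c / 2) * ‖cexp (-(bulk γ a c + boundary γ ℓ c)) - 1‖ := by
        rw [boundaryMulTruncated, norm_mul, norm_boundary, boltzmann_eq]
    _ ≤ ‖ℓ‖ * rexp (γ * c / 2) * ((a + ‖ℓ‖) * rexp (γ * c / 2)) := by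
        gcongr
        exact (Complex.norm_exp_neg_sub_one_le (re_bulk_add_boundary_nonneg ha hℓ c)).trans
          (norm_bulk_add_boundary_le hγ ha hc)
    _ = ‖ℓ‖ * (a + ‖ℓ‖) * rexp (γ * c) := by rw [← Real.exp_div_two_sq (γ * c)]; ring

theorem norm_boundaryMulTruncated_le (ha : 0 ≤ a) (hℓ : 0 ≤ ℓ.re) (c : ℝ) :
    ‖boundaryMulTruncated γ a ℓ c‖ ≤ 2 * ‖ℓ‖ * rexp (γ / 2 * c) := by
  calc ‖boundaryMulTruncated γ a ℓ c‖
      ≤ ‖ℓ‖ * rexp (γ / 2 * c) * (‖boltzmann γ a ℓ c‖ + ‖(1 : ℂ)‖) := by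
        rw [boundaryMulTruncated, norm_mul, norm_boundary, mul_div_right_comm]
        gcongr
        exact norm_sub_le _ _
    _ ≤ ‖ℓ‖ * rexp (γ / 2 * c) * (1 + 1) := by
        rw [norm_one]
        gcongr
        exact norm_boltzmann_le_one ha hℓ c
    _ = 2 * ‖ℓ‖ * rexp (γ / 2 * c) := by ring

section

variable {s : ℝ} (hγ : 0 < γ) (ha : 0 < a) (hℓ : 0 ≤ ℓ.re) (hs : s ∈ Ioo (-γ) (-(γ / 2)))
include hγ ha hℓ hs

theorem integrable_twiceTruncated :
    Integrable fun c : ℝ => cexp (s * c) * twiceTruncated γ a ℓ c :=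
  integrable_cexp_mul_of_norm_le
    (continuous_iff_continuousAt.2 fun c => (hasDerivAt_twiceTruncated c).continuousAt)
    (by linarith [hs.1]) (by linarith [hs.2])
    (fun _ hc => norm_twiceTruncated_le_of_nonpos hγ.le ha.le hℓ hc)
    (fun _ hc => norm_twiceTruncated_le_of_nonneg hγ.le ha.le hℓ hc)

theorem integrable_boundaryMulTruncated :
    Integrable fun c : ℝ => cexp (s * c) * boundaryMulTruncated γ a ℓ c :=
  integrable_cexp_mul_of_norm_le
    (continuous_iff_continuousAt.2 fun c => (hasDerivAt_boundaryMulTruncated c).continuousAt)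
    (by linarith [hs.1]) (by linarith [hs.2])
    (fun _ hc => norm_boundaryMulTruncated_le_of_nonpos hγ.le ha.le hℓ hc)
    (fun c _ => norm_boundaryMulTruncated_le ha.le hℓ c)

omit hγ hs in
-- Only `e^{-x} ≤ 2 / x²` is used for the decay of `E`, hence the restriction `s + p < 2γ`.
theorem integrable_mul_boltzmann {P : ℝ → ℂ} (hP : Continuous P) {C p : ℝ} (hp : 0 < s + p)
    (hp' : s + p < 2 * γ) (hPC : ∀ c, ‖P c‖ ≤ C * rexp (p * c)) :
    Integrable fun c : ℝ => cexp (s * c) * (P c * boltzmann γ a ℓ c) := by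
  refine integrable_cexp_mul_of_norm_le (f := fun c => P c * boltzmann γ a ℓ c)
    (C₁ := C) (C₂ := 2 * C / a ^ 2) (hP.mul continuous_boltzmann) hp
    (q := p - 2 * γ) (by linarith) (fun c _ => ?_) (fun c _ => ?_)
  · rw [norm_mul]
    exact (mul_le_mul (hPC c) (norm_boltzmann_le_one ha.le hℓ c) (norm_nonneg _)
      ((norm_nonneg _).trans (hPC c))).trans_eq (mul_one _)
  · have hdecay : ‖boltzmann γ a ℓ c‖ ≤ 2 / a ^ 2 * rexp (-(2 * γ) * c) := by
      refine (norm_boltzmann_le hℓ c).trans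
        ((Real.exp_neg_le_two_div_sq (by positivity)).trans_eq ?_)
      rw [mul_pow, ← Real.exp_nat_mul, neg_mul, Real.exp_neg]
      push_cast
      field_simp
    calc ‖P c * boltzmann γ a ℓ c‖ ≤ C * rexp (p * c) * (2 / a ^ 2 * rexp (-(2 * γ) * c)) := by
          rw [norm_mul]
          exact mul_le_mul (hPC c) hdecay (norm_nonneg _) ((norm_nonneg _).trans (hPC c))
      _ = 2 * C / a ^ 2 * rexp ((p - 2 * γ) * c) := by
          rw [neg_mul, sub_mul, sub_eq_add_neg, Real.exp_add]
          ring

theorem integrable_bulk_mul_boltzmann :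
    Integrable fun c : ℝ => cexp (s * c) * (bulk γ a c * boltzmann γ a ℓ c) :=
  integrable_mul_boltzmann ha hℓ continuous_bulk (by linarith [hs.1]) (by linarith [hs.2])
    fun c => (norm_bulk ha.le c).le

theorem integrable_bulk_mul_boundary_mul_boltzmann :
    Integrable fun c : ℝ => cexp (s * c) * (bulk γ a c * boundary γ ℓ c * boltzmann γ a ℓ c) := by
  refine integrable_mul_boltzmann ha hℓ (continuous_bulk.mul continuous_boundary) (C := a * ‖ℓ‖)
    (p := 3 * γ / 2) (by linarith [hs.1]) (by linarith [hs.2]) fun c => le_of_eq ?_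
  rw [norm_mul, norm_bulk ha.le, norm_boundary, show 3 * γ / 2 * c = γ * c + γ * c / 2 by ring,
    Real.exp_add]
  ring

theorem integrable_boundary_sq_mul_boltzmann :
    Integrable fun c : ℝ => cexp (s * c) * (boundary γ ℓ c ^ 2 * boltzmann γ a ℓ c) := by
  refine integrable_mul_boltzmann ha hℓ (continuous_boundary.pow 2) (C := ‖ℓ‖ ^ 2)
    (p := γ) (by linarith [hs.1]) (by linarith [hs.2]) fun c => le_of_eq ?_
  rw [norm_pow, norm_boundary, mul_pow, Real.exp_div_two_sq]

theorem integral_twiceTruncated :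
    s * ∫ c : ℝ, cexp (s * c) * twiceTruncated γ a ℓ c =
      γ * (∫ c : ℝ, cexp (s * c) * (bulk γ a c * boltzmann γ a ℓ c)) +
        γ / 2 * ∫ c : ℝ, cexp (s * c) * boundaryMulTruncated γ a ℓ c := by
  have hbulk := (integrable_bulk_mul_boltzmann hγ ha hℓ hs).const_mul (γ : ℂ)
  have htrunc := (integrable_boundaryMulTruncated hγ ha hℓ hs).const_mul ((γ : ℂ) / 2)
  have hsplit (c : ℝ) : cexp (s * c) * -(γ * (bulk γ a c * boltzmann γ a ℓ c) +
      γ / 2 * boundaryMulTruncated γ a ℓ c) =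
      -(γ * (cexp (s * c) * (bulk γ a c * boltzmann γ a ℓ c)) +
        γ / 2 * (cexp (s * c) * boundaryMulTruncated γ a ℓ c)) := by
    ring
  have hibp := integral_cexp_mul_deriv hasDerivAt_twiceTruncated
    (integrable_twiceTruncated hγ ha hℓ hs)
    (by simpa only [hsplit] using (hbulk.fun_add htrunc).fun_neg)
  simp only [hsplit, integral_neg, integral_add hbulk htrunc, integral_const_mul] at hibp
  linear_combination hibp

theorem integral_boundaryMulTruncated :
    (s + γ / 2) * ∫ c : ℝ, cexp (s * c) * boundaryMulTruncated γ a ℓ c =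
      γ * (∫ c : ℝ, cexp (s * c) * (bulk γ a c * boundary γ ℓ c * boltzmann γ a ℓ c)) +
        γ / 2 * ∫ c : ℝ, cexp (s * c) * (boundary γ ℓ c ^ 2 * boltzmann γ a ℓ c) := by
  have htrunc := (integrable_boundaryMulTruncated hγ ha hℓ hs).const_mul ((γ : ℂ) / 2)
  have hmixed := (integrable_bulk_mul_boundary_mul_boltzmann hγ ha hℓ hs).const_mul (γ : ℂ)
  have hsq := (integrable_boundary_sq_mul_boltzmann hγ ha hℓ hs).const_mul ((γ : ℂ) / 2)
  have hsplit (c : ℝ) : cexp (s * c) * (γ / 2 * boundaryMulTruncated γ a ℓ c -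
      (γ * (bulk γ a c * boundary γ ℓ c * boltzmann γ a ℓ c) +
        γ / 2 * (boundary γ ℓ c ^ 2 * boltzmann γ a ℓ c))) =
      γ / 2 * (cexp (s * c) * boundaryMulTruncated γ a ℓ c) -
        (γ * (cexp (s * c) * (bulk γ a c * boundary γ ℓ c * boltzmann γ a ℓ c)) +
          γ / 2 * (cexp (s * c) * (boundary γ ℓ c ^ 2 * boltzmann γ a ℓ c))) := by
    ring
  have hibp := integral_cexp_mul_deriv hasDerivAt_boundaryMulTruncated
    (integrable_boundaryMulTruncated hγ ha hℓ hs)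
    (by simp only [hsplit]; exact htrunc.sub (hmixed.fun_add hsq))
  simp only [hsplit, integral_sub htrunc (hmixed.fun_add hsq), integral_add hmixed hsq,
    integral_const_mul] at hibp
  linear_combination hibp

end

end LiouvilleZeroMode

open LiouvilleZeroMode

/-- Twice-truncated integration-by-parts identity in the zero mode `c`, extending the
probabilistic definitions of the Liouville correlation functions `H` and `R` to a wider
parameter range (Remark 2.17 of the paper). -/
theorem liouville_zero_mode_ibp_double_truncated (γ s a : ℝ) (hγ : 0 < γ)
    (hs : s ∈ Set.Ioo (-γ) (-(γ / 2))) (ha : 0 < a) (ℓ : ℂ) (hℓ : 0 ≤ ℓ.re) :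
    Integrable (fun c : ℝ =>
      Complex.exp (s * c) *
        (Complex.exp (-(a * Real.exp (γ * c)) - ℓ * Real.exp (γ * c / 2)) - 1
          + ℓ * Real.exp (γ * c / 2))) ∧
    Integrable (fun c : ℝ =>
      Complex.exp (s * c) *
        ((γ * (s + γ / 2)) * (a * Real.exp (γ * c))
          + (γ ^ 2 / 2) * ((a : ℂ) * Real.exp (γ * c)) * (ℓ * Real.exp (γ * c / 2))
          + (γ ^ 2 / 4) * (ℓ * Real.exp (γ * c / 2)) ^ 2) *
        Complex.exp (-(a * Real.exp (γ * c)) - ℓ * Real.exp (γ * c / 2))) ∧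
    ((s : ℂ) * (s + γ / 2)) *
        ∫ c : ℝ, Complex.exp (s * c) *
          (Complex.exp (-(a * Real.exp (γ * c)) - ℓ * Real.exp (γ * c / 2)) - 1
            + ℓ * Real.exp (γ * c / 2)) =
      ∫ c : ℝ, Complex.exp (s * c) *
        ((γ * (s + γ / 2)) * (a * Real.exp (γ * c))
          + (γ ^ 2 / 2) * ((a : ℂ) * Real.exp (γ * c)) * (ℓ * Real.exp (γ * c / 2))
          + (γ ^ 2 / 4) * (ℓ * Real.exp (γ * c / 2)) ^ 2) *
        Complex.exp (-(a * Real.exp (γ * c)) - ℓ * Real.exp (γ * c / 2)) := by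
  have hbulk := (integrable_bulk_mul_boltzmann hγ ha hℓ hs).const_mul ((γ : ℂ) * (s + γ / 2))
  have hmixed := (integrable_bulk_mul_boundary_mul_boltzmann hγ ha hℓ hs).const_mul
    ((γ : ℂ) ^ 2 / 2)
  have hsq := (integrable_boundary_sq_mul_boltzmann hγ ha hℓ hs).const_mul ((γ : ℂ) ^ 2 / 4)
  refine ⟨integrable_twiceTruncated hγ ha hℓ hs, ?_, ?_⟩
  · refine (hbulk.fun_add (hmixed.fun_add hsq)).congr (.of_forall fun c => ?_)
    simp only [bulk, boundary, boltzmann]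
    ring
  · change (s : ℂ) * (s + γ / 2) * ∫ c : ℝ, cexp (s * c) * twiceTruncated γ a ℓ c = _
    calc _ = ∫ c : ℝ, (γ * (s + γ / 2) * (cexp (s * c) * (bulk γ a c * boltzmann γ a ℓ c)) +
          (γ ^ 2 / 2 * (cexp (s * c) * (bulk γ a c * boundary γ ℓ c * boltzmann γ a ℓ c)) +
            γ ^ 2 / 4 * (cexp (s * c) * (boundary γ ℓ c ^ 2 * boltzmann γ a ℓ c)))) := by
          rw [integral_add hbulk (hmixed.fun_add hsq), integral_add hmixed hsq,
            integral_const_mul, integral_const_mul, integral_const_mul]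
          linear_combination (s + γ / 2 : ℂ) * integral_twiceTruncated hγ ha hℓ hs +
            (γ / 2 : ℂ) * integral_boundaryMulTruncated hγ ha hℓ hs
      _ = _ := by
          congr 1 with c
          simp only [bulk, boundary, boltzmann]
          ring
end

section
/- Let γ ∈ (0,2), set Q = γ/2 + 2/γ, and let β₁, β₂ ∈ (0, 2/γ) satisfy β₁ + β₂ > 2/γ; set β₃ = 4/γ − β₁ − β₂ (equivalently β₁ + β₂ + β₃ = 2Q − γ). Let σ₁, σ₂, σ₃ ∈ ℝ and define μ_i = (sin(πγ²/4))^{−1/2} · cos(πγ(σ_i − Q/2)) for i = 1,2,3. Then the three integrals below converge and μ₁ ∫_{−∞}^{0} |x|^{−γβ₁/2} |x−1|^{−γβ₂/2} dx + μ₂ ∫_{0}^{1} x^{−γβ₁/2} (1−x)^{−γβ₂/2} dx + μ₃ ∫_{1}^{∞} x^{−γβ₁/2} (x−1)^{−γβ₂/2} dx = (1/π) · (sin(πγ²/4))^{−1/2} · Γ(1 − γβ₂/2) · Γ(1 − γβ₃/2) · Γ(γβ₂/2 + γβ₃/2 − 1) · ( cos(πγ(σ₁ − Q/2)) sin(πγβ₂/2)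 + cos(πγ(σ₂ − Q/2)) sin(πγβ₃/2) − cos(πγ(σ₃ − Q/2)) sin(πγ(β₂+β₃)/2) ). -/
/-!
With `a, b, c = γβᵢ/2` we have `a, b, c < 1` and `a + b + c = 2`. Each integral is an Euler Beta
integral: `x ↦ 1/x` carries `(1, ∞)` onto `(0, 1)` and `x ↦ 1 - x` carries `(-∞, 0)` onto
`(1, ∞)`, so the three integrals are `Γ(1-c)Γ(1-a)/Γ(b)`, `Γ(1-a)Γ(1-b)/Γ(c)` and
`Γ(1-c)Γ(1-b)/Γ(a)`. The reflection formula `1/Γ(x) = Γ(1-x) sin(πx)/π` turns them into the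
common factor `Γ(1-a)Γ(1-b)Γ(1-c)/π` times `sin πb`, `sin πc` and `sin πa = -sin π(b+c)`.
-/

open MeasureTheory Set Real

lemma ofReal_cpow_mul_one_sub_cpow {x : ℝ} (hx : x ∈ Icc 0 1) (p q : ℝ) :
    (x : ℂ) ^ ((p : ℂ) - 1) * (1 - (x : ℂ)) ^ ((q : ℂ) - 1)
      = ((x ^ (p - 1) * (1 - x) ^ (q - 1) : ℝ) : ℂ) := by
  push_cast
  rw [Complex.ofReal_cpow hx.1, Complex.ofReal_cpow (sub_nonneg.2 hx.2)]
  push_cast; rfl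

lemma integrableOn_rpow_mul_one_sub_rpow {p q : ℝ} (hp : 0 < p) (hq : 0 < q) :
    IntegrableOn (fun x : ℝ => x ^ (p - 1) * (1 - x) ^ (q - 1)) (Ioo 0 1) := by
  have h := ((Complex.betaIntegral_convergent (u := p) (v := q) (by simpa) (by simpa)).1).mono_set
    Ioo_subset_Ioc_self
  have := (h.congr_fun (fun x hx => ofReal_cpow_mul_one_sub_cpow (Ioo_subset_Icc_self hx) p q)
    measurableSet_Ioo).re
  simpa [IntegrableOn] using this

lemma integral_rpow_mul_one_sub_rpow {p q : ℝ} (hp : 0 < p) (hq : 0 < q) :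
    ∫ x in Ioo (0 : ℝ) 1, x ^ (p - 1) * (1 - x) ^ (q - 1) = Gamma p * Gamma q / Gamma (p + q) := by
  have h := Complex.betaIntegral_eq_Gamma_mul_div p q (by simpa) (by simpa)
  rw [Complex.betaIntegral, intervalIntegral.integral_of_le zero_le_one,
    integral_Ioc_eq_integral_Ioo, setIntegral_congr_fun measurableSet_Ioo
      (fun x hx => ofReal_cpow_mul_one_sub_cpow (Ioo_subset_Icc_self hx) p q),
    integral_complex_ofReal,
    ← Complex.ofReal_add, Complex.Gamma_ofReal, Complex.Gamma_ofReal, Complex.Gamma_ofReal] at h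
  exact_mod_cast h

lemma Real.inv_Gamma_eq_of_sin_ne_zero {x : ℝ} (h : sin (π * x) ≠ 0) :
    (Gamma x)⁻¹ = Gamma (1 - x) * sin (π * x) / π := by
  have hrefl := Gamma_mul_Gamma_one_sub x
  have hx : Gamma x ≠ 0 := by
    rintro h0
    rw [h0, zero_mul, eq_comm, div_eq_zero_iff] at hrefl
    exact hrefl.elim pi_ne_zero h
  field_simp
  rw [hrefl]
  field_simp

section Substitution

variable {E : Type*} [NormedAddCommGroup E]

lemma image_inv_Ioo_zero_one : (·⁻¹) '' Ioo (0 : ℝ) 1 = Ioi 1 := by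
  rw [image_inv_eq_inv, inv_Ioo_0_left one_pos, inv_one]

lemma hasDerivWithinAt_inv_Ioo_zero_one {t : ℝ} (ht : t ∈ Ioo (0 : ℝ) 1) :
    HasDerivWithinAt (·⁻¹) (-(t ^ 2)⁻¹) (Ioo 0 1) t :=
  (hasDerivAt_inv ht.1.ne').hasDerivWithinAt

lemma integrableOn_Ioi_one_iff_comp_inv [NormedSpace ℝ E] {f : ℝ → E} :
    IntegrableOn f (Ioi 1) ↔ IntegrableOn (fun t : ℝ => (t ^ 2)⁻¹ • f t⁻¹) (Ioo 0 1) := by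
  rw [← image_inv_Ioo_zero_one, integrableOn_image_iff_integrableOn_abs_deriv_smul
    measurableSet_Ioo (fun t ht => hasDerivWithinAt_inv_Ioo_zero_one ht) inv_injective.injOn]
  simp_rw [abs_neg, abs_inv, abs_sq]

lemma integral_Ioi_one_eq_integral_comp_inv [NormedSpace ℝ E] (f : ℝ → E) :
    ∫ x in Ioi 1, f x = ∫ t in Ioo (0 : ℝ) 1, (t ^ 2)⁻¹ • f t⁻¹ := by
  rw [← image_inv_Ioo_zero_one, integral_image_eq_integral_abs_deriv_smul
    measurableSet_Ioo (fun t ht => hasDerivWithinAt_inv_Ioo_zero_one ht) inv_injective.injOn]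
  simp_rw [abs_neg, abs_inv, abs_sq]

lemma measurePreserving_one_sub : MeasurePreserving (fun x : ℝ => 1 - x) :=
  Measure.measurePreserving_sub_left volume 1

lemma preimage_one_sub_Ioi_one : (fun x : ℝ => 1 - x) ⁻¹' Ioi 1 = Iio 0 := by
  ext x; simp

lemma integrableOn_Iio_zero_comp_one_sub_iff {f : ℝ → E} :
    IntegrableOn (fun x => f (1 - x)) (Iio 0) ↔ IntegrableOn f (Ioi 1) := by
  rw [← preimage_one_sub_Ioi_one]
  exact measurePreserving_one_sub.integrableOn_comp_preimage
    (Homeomorph.subLeft (1 : ℝ)).measurableEmbedding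

lemma integral_Iio_zero_comp_one_sub [NormedSpace ℝ E] (f : ℝ → E) :
    ∫ x in Iio 0, f (1 - x) = ∫ y in Ioi 1, f y := by
  rw [← preimage_one_sub_Ioi_one]
  exact measurePreserving_one_sub.setIntegral_preimage_emb
    (Homeomorph.subLeft (1 : ℝ)).measurableEmbedding f _

end Substitution

lemma inv_sq_smul_inv_rpow_mul_inv_sub_one_rpow {t : ℝ} (ht : t ∈ Ioo (0 : ℝ) 1) (a b : ℝ) :
    (t ^ 2)⁻¹ • (t⁻¹ ^ (-a) * (t⁻¹ - 1) ^ (-b))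
      = t ^ ((a + b - 1) - 1) * (1 - t) ^ ((1 - b) - 1) := by
  obtain ⟨ht0, ht1⟩ := ht
  have h1t : 0 ≤ 1 - t := by linarith
  rw [show t⁻¹ - 1 = (1 - t) * t⁻¹ by field_simp, mul_rpow h1t (inv_nonneg.2 ht0.le),
    inv_rpow ht0.le, inv_rpow ht0.le, rpow_neg ht0.le, rpow_neg ht0.le, inv_inv, inv_inv,
    show (a + b - 1) - 1 = a + b + (-2) by ring, rpow_add ht0, rpow_add ht0, rpow_neg ht0.le,
    rpow_two, show (1 - b) - 1 = -b by ring, smul_eq_mul]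
  ring

lemma integrableOn_Ioi_one_rpow_mul_sub_one_rpow {a b : ℝ} (hb : b < 1) (hab : 1 < a + b) :
    IntegrableOn (fun x : ℝ => x ^ (-a) * (x - 1) ^ (-b)) (Ioi 1) := by
  rw [integrableOn_Ioi_one_iff_comp_inv]
  exact (integrableOn_rpow_mul_one_sub_rpow (p := a + b - 1) (q := 1 - b) (by linarith)
    (by linarith)).congr_fun (fun t ht => (inv_sq_smul_inv_rpow_mul_inv_sub_one_rpow ht a b).symm)
    measurableSet_Ioo

lemma integral_Ioi_one_rpow_mul_sub_one_rpow {a b : ℝ} (hb : b < 1) (hab : 1 < a + b) :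
    ∫ x in Ioi (1 : ℝ), x ^ (-a) * (x - 1) ^ (-b)
      = Gamma (a + b - 1) * Gamma (1 - b) / Gamma a := by
  rw [integral_Ioi_one_eq_integral_comp_inv, setIntegral_congr_fun measurableSet_Ioo
    (fun t ht => inv_sq_smul_inv_rpow_mul_inv_sub_one_rpow ht a b),
    integral_rpow_mul_one_sub_rpow (by linarith) (by linarith),
    show a + b - 1 + (1 - b) = a by ring]

lemma abs_rpow_mul_abs_sub_one_rpow_eq_comp_one_sub {x : ℝ} (hx : x ∈ Iio (0 : ℝ)) (a b : ℝ) :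
    |x| ^ (-a) * |x - 1| ^ (-b) = (1 - x) ^ (-b) * ((1 - x) - 1) ^ (-a) := by
  have hx : x < 0 := hx
  rw [abs_of_neg hx, abs_of_neg (by linarith), sub_sub_cancel_left, neg_sub, mul_comm]

lemma integrableOn_Iio_zero_abs_rpow_mul_abs_sub_one_rpow {a b : ℝ} (ha : a < 1)
    (hab : 1 < a + b) :
    IntegrableOn (fun x : ℝ => |x| ^ (-a) * |x - 1| ^ (-b)) (Iio 0) := by
  refine IntegrableOn.congr_fun ?_
    (fun x hx => (abs_rpow_mul_abs_sub_one_rpow_eq_comp_one_sub hx a b).symm) measurableSet_Iio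
  rw [integrableOn_Iio_zero_comp_one_sub_iff (f := fun y : ℝ => y ^ (-b) * (y - 1) ^ (-a))]
  exact integrableOn_Ioi_one_rpow_mul_sub_one_rpow ha (by linarith)

lemma integral_Iio_zero_abs_rpow_mul_abs_sub_one_rpow {a b : ℝ} (ha : a < 1) (hab : 1 < a + b) :
    ∫ x in Iio (0 : ℝ), |x| ^ (-a) * |x - 1| ^ (-b)
      = Gamma (a + b - 1) * Gamma (1 - a) / Gamma b := by
  rw [setIntegral_congr_fun measurableSet_Iio
      (fun x hx => abs_rpow_mul_abs_sub_one_rpow_eq_comp_one_sub hx a b),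
    integral_Iio_zero_comp_one_sub (fun y : ℝ => y ^ (-b) * (y - 1) ^ (-a)),
    integral_Ioi_one_rpow_mul_sub_one_rpow ha (by linarith), add_comm b a]

lemma integrableOn_Ioo_rpow_mul_one_sub_rpow {a b : ℝ} (ha : a < 1) (hb : b < 1) :
    IntegrableOn (fun x : ℝ => x ^ (-a) * (1 - x) ^ (-b)) (Ioo 0 1) := by
  simpa using integrableOn_rpow_mul_one_sub_rpow (p := 1 - a) (q := 1 - b) (by linarith)
    (by linarith)

lemma integral_Ioo_rpow_mul_one_sub_rpow {a b : ℝ} (ha : a < 1) (hb : b < 1) :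
    ∫ x in Ioo (0 : ℝ) 1, x ^ (-a) * (1 - x) ^ (-b)
      = Gamma (1 - a) * Gamma (1 - b) / Gamma (2 - a - b) := by
  simpa [sub_add_sub_comm, one_add_one_eq_two, sub_sub] using
    integral_rpow_mul_one_sub_rpow (p := 1 - a) (q := 1 - b) (by linarith) (by linarith)

lemma sum_weighted_boundary_integrals {a b c : ℝ} (ha : a < 1) (hb : b < 1) (hc : c < 1)
    (habc : a + b + c = 2) (μ₁ μ₂ μ₃ : ℝ) :
    μ₁ * (∫ x in Iio (0 : ℝ), |x| ^ (-a) * |x - 1| ^ (-b))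
      + μ₂ * (∫ x in Ioo (0 : ℝ) 1, x ^ (-a) * (1 - x) ^ (-b))
      + μ₃ * (∫ x in Ioi (1 : ℝ), x ^ (-a) * (x - 1) ^ (-b))
      = Gamma (1 - b) * Gamma (1 - c) * Gamma (b + c - 1) / π
        * (μ₁ * sin (π * b) + μ₂ * sin (π * c) - μ₃ * sin (π * (b + c))) := by
  have sin_pi_mul_pos {x : ℝ} (hx0 : 0 < x) (hx1 : x < 1) : 0 < sin (π * x) :=
    sin_pos_of_pos_of_lt_pi (by positivity) (by nlinarith [pi_pos])
  have hab : 1 < a + b := by linarith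
  rw [integral_Iio_zero_abs_rpow_mul_abs_sub_one_rpow ha hab,
    integral_Ioo_rpow_mul_one_sub_rpow ha hb, integral_Ioi_one_rpow_mul_sub_one_rpow hb hab,
    show a + b - 1 = 1 - c by linarith, show 2 - a - b = c by linarith,
    show b + c - 1 = 1 - a by linarith,
    show π * (b + c) = 2 * π - π * a by linear_combination π * habc,
    sin_two_pi_sub, div_eq_mul_inv, div_eq_mul_inv, div_eq_mul_inv,
    inv_Gamma_eq_of_sin_ne_zero (sin_pi_mul_pos (by linarith) hb).ne',
    inv_Gamma_eq_of_sin_ne_zero (sin_pi_mul_pos (by linarith) hc).ne',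
    inv_Gamma_eq_of_sin_ne_zero (sin_pi_mul_pos (by linarith) ha).ne']
  ring

theorem expected_boundary_length_general (γ : ℝ) (hγ : 0 < γ)
    (β₁ β₂ β₃ Q σ₁ σ₂ σ₃ μ₁ μ₂ μ₃ : ℝ)
    (hβ₁ : β₁ ∈ Set.Ioo 0 (2 / γ)) (hβ₂ : β₂ ∈ Set.Ioo 0 (2 / γ))
    (hsum : 2 / γ < β₁ + β₂)
    (hβ₃ : β₃ = 4 / γ - β₁ - β₂)
    (hμ₁ : μ₁ = Real.sin (Real.pi * γ ^ 2 / 4) ^ (-(1 / 2 : ℝ)) *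
      Real.cos (Real.pi * γ * (σ₁ - Q / 2)))
    (hμ₂ : μ₂ = Real.sin (Real.pi * γ ^ 2 / 4) ^ (-(1 / 2 : ℝ)) *
      Real.cos (Real.pi * γ * (σ₂ - Q / 2)))
    (hμ₃ : μ₃ = Real.sin (Real.pi * γ ^ 2 / 4) ^ (-(1 / 2 : ℝ)) *
      Real.cos (Real.pi * γ * (σ₃ - Q / 2))) :
    IntegrableOn (fun x : ℝ => |x| ^ (-(γ * β₁ / 2)) * |x - 1| ^ (-(γ * β₂ / 2)))
      (Set.Iio 0) ∧
    IntegrableOn (fun x : ℝ => x ^ (-(γ * β₁ / 2)) * (1 - x) ^ (-(γ * β₂ / 2)))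
      (Set.Ioo 0 1) ∧
    IntegrableOn (fun x : ℝ => x ^ (-(γ * β₁ / 2)) * (x - 1) ^ (-(γ * β₂ / 2)))
      (Set.Ioi 1) ∧
    μ₁ * (∫ x in Set.Iio (0 : ℝ), |x| ^ (-(γ * β₁ / 2)) * |x - 1| ^ (-(γ * β₂ / 2)))
      + μ₂ * (∫ x in Set.Ioo (0 : ℝ) 1, x ^ (-(γ * β₁ / 2)) * (1 - x) ^ (-(γ * β₂ / 2)))
      + μ₃ * (∫ x in Set.Ioi (1 : ℝ), x ^ (-(γ * β₁ / 2)) * (x - 1) ^ (-(γ * β₂ / 2)))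
      = (1 / Real.pi) * Real.sin (Real.pi * γ ^ 2 / 4) ^ (-(1 / 2 : ℝ))
        * Real.Gamma (1 - γ * β₂ / 2) * Real.Gamma (1 - γ * β₃ / 2)
        * Real.Gamma (γ * β₂ / 2 + γ * β₃ / 2 - 1)
        * (Real.cos (Real.pi * γ * (σ₁ - Q / 2)) * Real.sin (Real.pi * γ * β₂ / 2)
          + Real.cos (Real.pi * γ * (σ₂ - Q / 2)) * Real.sin (Real.pi * γ * β₃ / 2)
          - Real.cos (Real.pi * γ * (σ₃ - Q / 2))
            * Real.sin (Real.pi * γ * (β₂ + β₃) / 2)) := by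
  have ha : γ * β₁ / 2 < 1 := by have := (lt_div_iff₀ hγ).1 hβ₁.2; linarith
  have hb : γ * β₂ / 2 < 1 := by have := (lt_div_iff₀ hγ).1 hβ₂.2; linarith
  have hab : 1 < γ * β₁ / 2 + γ * β₂ / 2 := by have := (div_lt_iff₀ hγ).1 hsum; linarith
  have habc : γ * β₁ / 2 + γ * β₂ / 2 + γ * β₃ / 2 = 2 := by
    rw [hβ₃]; field_simp; ring
  refine ⟨integrableOn_Iio_zero_abs_rpow_mul_abs_sub_one_rpow ha hab,
    integrableOn_Ioo_rpow_mul_one_sub_rpow ha hb,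
    integrableOn_Ioi_one_rpow_mul_sub_one_rpow hb hab, ?_⟩
  rw [sum_weighted_boundary_integrals ha hb (by linarith) habc, hμ₁, hμ₂, hμ₃]
  ring_nf

/-- Evaluation of the expected boundary Liouville length
`E[L̃] = μ₁∫_{−∞}^0 + μ₂∫_0^1 + μ₃∫_1^∞` appearing in the residue computation of the boundary
three-point structure constant at `β₁ = 2Q − β₂ − β₃ − γ` (proof of Lemma 5.1 of the paper). -/
theorem expected_boundary_length (γ : ℝ) (hγ : 0 < γ) (hγ2 : γ < 2)
    (β₁ β₂ β₃ Q σ₁ σ₂ σ₃ μ₁ μ₂ μ₃ : ℝ)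
    (hQ : Q = γ / 2 + 2 / γ)
    (hβ₁ : β₁ ∈ Set.Ioo 0 (2 / γ)) (hβ₂ : β₂ ∈ Set.Ioo 0 (2 / γ))
    (hsum : 2 / γ < β₁ + β₂)
    (hβ₃ : β₃ = 4 / γ - β₁ - β₂)
    (hμ₁ : μ₁ = Real.sin (Real.pi * γ ^ 2 / 4) ^ (-(1 / 2 : ℝ)) *
      Real.cos (Real.pi * γ * (σ₁ - Q / 2)))
    (hμ₂ : μ₂ = Real.sin (Real.pi * γ ^ 2 / 4) ^ (-(1 / 2 : ℝ)) *
      Real.cos (Real.pi * γ * (σ₂ - Q / 2)))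
    (hμ₃ : μ₃ = Real.sin (Real.pi * γ ^ 2 / 4) ^ (-(1 / 2 : ℝ)) *
      Real.cos (Real.pi * γ * (σ₃ - Q / 2))) :
    IntegrableOn (fun x : ℝ => |x| ^ (-(γ * β₁ / 2)) * |x - 1| ^ (-(γ * β₂ / 2)))
      (Set.Iio 0) ∧
    IntegrableOn (fun x : ℝ => x ^ (-(γ * β₁ / 2)) * (1 - x) ^ (-(γ * β₂ / 2)))
      (Set.Ioo 0 1) ∧
    IntegrableOn (fun x : ℝ => x ^ (-(γ * β₁ / 2)) * (x - 1) ^ (-(γ * β₂ / 2)))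
      (Set.Ioi 1) ∧
    μ₁ * (∫ x in Set.Iio (0 : ℝ), |x| ^ (-(γ * β₁ / 2)) * |x - 1| ^ (-(γ * β₂ / 2)))
      + μ₂ * (∫ x in Set.Ioo (0 : ℝ) 1, x ^ (-(γ * β₁ / 2)) * (1 - x) ^ (-(γ * β₂ / 2)))
      + μ₃ * (∫ x in Set.Ioi (1 : ℝ), x ^ (-(γ * β₁ / 2)) * (x - 1) ^ (-(γ * β₂ / 2)))
      = (1 / Real.pi) * Real.sin (Real.pi * γ ^ 2 / 4) ^ (-(1 / 2 : ℝ))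
        * Real.Gamma (1 - γ * β₂ / 2) * Real.Gamma (1 - γ * β₃ / 2)
        * Real.Gamma (γ * β₂ / 2 + γ * β₃ / 2 - 1)
        * (Real.cos (Real.pi * γ * (σ₁ - Q / 2)) * Real.sin (Real.pi * γ * β₂ / 2)
          + Real.cos (Real.pi * γ * (σ₂ - Q / 2)) * Real.sin (Real.pi * γ * β₃ / 2)
          - Real.cos (Real.pi * γ * (σ₃ - Q / 2))
            * Real.sin (Real.pi * γ * (β₂ + β₃) / 2)) :=
  expected_boundary_length_general γ hγ β₁ β₂ β₃ Q σ₁ σ₂ σ₃ μ₁ μ₂ μ₃ hβ₁ hβ₂ hsum hβ₃ hμ₁ hμ₂ hμ₃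
end

section
/- Let p, q be real numbers with 0 < p < q < 1. Then the function u ↦ ((1+u)^p − u^p)·u^{−q} is Lebesgue integrable on (0, ∞) and ∫_0^∞ ((1+u)^p − u^p) u^{−q} du = Γ(q − p − 1) · Γ(1 − q) / Γ(−p), where Γ denotes the Gamma function. -/
/-!
Write `(1 + u) ^ p - u ^ p = ∫₀¹ p (t + u) ^ (p - 1) dt` and exchange the order of integration,
which is legitimate because the integrand is nonnegative. The substitution `u = t v` shows that
the inner integral `∫₀^∞ u ^ (-q) (t + u) ^ (p - 1) du` is `t ^ (p - q)` times the Beta integral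
`∫₀^∞ v ^ (-q) (1 + v) ^ (p - 1) dv = B(1 - q, q - p)` (the substitution `v = x / (1 - x)`
brings it back to the Beta integral over `(0, 1)`), and integrating `t ^ (p - q)` over
`(0, 1)` leaves `p B(1 - q, q - p) / (p - q + 1)`. The functional equation `Γ(s + 1) = s Γ(s)`
turns this into `Γ(1 - q) Γ(q - p - 1) / Γ(-p)`, the Beta function continued to the negative
argument `q - p - 1`.
-/

open MeasureTheory Set Real

lemma ofReal_rpow_mul_one_sub_rpow (a b : ℝ) {x : ℝ} (hx : x ∈ Icc (0 : ℝ) 1) :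
    ((x ^ (a - 1) * (1 - x) ^ (b - 1) : ℝ) : ℂ) =
      (x : ℂ) ^ ((a : ℂ) - 1) * (1 - (x : ℂ)) ^ ((b : ℂ) - 1) := by
  rw [Complex.ofReal_mul, Complex.ofReal_cpow hx.1, Complex.ofReal_cpow (sub_nonneg.2 hx.2)]
  push_cast
  rfl

lemma ofReal_integral_rpow_mul_one_sub_rpow_eq_betaIntegral (a b : ℝ) :
    (((∫ x in (0 : ℝ)..1, x ^ (a - 1) * (1 - x) ^ (b - 1)) : ℝ) : ℂ) =
      Complex.betaIntegral a b := by
  rw [← intervalIntegral.integral_ofReal, Complex.betaIntegral]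
  refine intervalIntegral.integral_congr fun x hx => ?_
  rw [uIcc_of_le zero_le_one] at hx
  exact ofReal_rpow_mul_one_sub_rpow a b hx

lemma integrableOn_Ioc_rpow_mul_one_sub_rpow {a b : ℝ} (ha : 0 < a) (hb : 0 < b) :
    IntegrableOn (fun x : ℝ => x ^ (a - 1) * (1 - x) ^ (b - 1)) (Ioc 0 1) := by
  have h := Complex.betaIntegral_convergent (u := a) (v := b) (by simpa) (by simpa)
  rw [intervalIntegrable_iff_integrableOn_Ioc_of_le zero_le_one] at h
  simpa [IntegrableOn] using (h.congr_fun (fun x hx => (ofReal_rpow_mul_one_sub_rpow a b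
    (Ioc_subset_Icc_self hx)).symm) measurableSet_Ioc).re

lemma integral_Ioc_rpow_mul_one_sub_rpow {a b : ℝ} (ha : 0 < a) (hb : 0 < b) :
    ∫ x in Ioc (0 : ℝ) 1, x ^ (a - 1) * (1 - x) ^ (b - 1) =
      Gamma a * Gamma b / Gamma (a + b) := by
  rw [← intervalIntegral.integral_of_le zero_le_one]
  apply Complex.ofReal_injective
  rw [ofReal_integral_rpow_mul_one_sub_rpow_eq_betaIntegral,
    Complex.betaIntegral_eq_Gamma_mul_div _ _ (by simpa) (by simpa)]
  push_cast
  simp only [← Complex.ofReal_add, Complex.Gamma_ofReal]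

lemma image_div_one_sub_Ioo : (fun x : ℝ => x / (1 - x)) '' Ioo 0 1 = Ioi 0 := by
  ext y
  constructor
  · rintro ⟨x, hx, rfl⟩
    exact div_pos hx.1 (sub_pos.2 hx.2)
  · intro (hy : 0 < y)
    refine ⟨y / (1 + y), ⟨by positivity, (div_lt_one (by positivity)).2 (by linarith)⟩, ?_⟩
    field_simp
    ring

lemma injOn_div_one_sub_Ioo : InjOn (fun x : ℝ => x / (1 - x)) (Ioo 0 1) := by
  intro x hx y hy h
  have := sub_pos.2 hx.2
  have := sub_pos.2 hy.2
  field_simp at h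
  linarith

lemma hasDerivWithinAt_div_one_sub_Ioo :
    ∀ x ∈ Ioo (0 : ℝ) 1, HasDerivWithinAt (fun x : ℝ => x / (1 - x)) ((1 - x) ^ 2)⁻¹ (Ioo 0 1) x :=
  fun x hx => ((hasDerivAt_id' x).div ((hasDerivAt_id' x).const_sub 1)
    (sub_ne_zero.2 hx.2.ne')).hasDerivWithinAt.congr_deriv (by ring)

lemma abs_deriv_mul_rpow_div_one_sub {a b x : ℝ} (hx : x ∈ Ioo (0 : ℝ) 1) :
    |((1 - x) ^ 2)⁻¹| * ((x / (1 - x)) ^ (a - 1) * (1 + x / (1 - x)) ^ (-(a + b))) =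
      x ^ (a - 1) * (1 - x) ^ (b - 1) := by
  have hy : 0 < 1 - x := sub_pos.2 hx.2
  have h1 : 1 + x / (1 - x) = (1 - x)⁻¹ := by field_simp; ring
  have h2 : (1 - x) ^ (a + b) = (1 - x) ^ (a - 1) * (1 - x) ^ (b - 1) * (1 - x) ^ 2 := by
    rw [← rpow_natCast, ← rpow_add hy, ← rpow_add hy]
    ring_nf
  rw [h1, div_rpow hx.1.le hy.le, inv_rpow hy.le, rpow_neg hy.le, inv_inv, h2,
    abs_of_pos (by positivity)]
  have : 0 < (1 - x) ^ (a - 1) := rpow_pos_of_pos hy _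
  field_simp

lemma integrableOn_Ioi_rpow_mul_one_add_rpow {a b : ℝ} (ha : 0 < a) (hb : 0 < b) :
    IntegrableOn (fun v : ℝ => v ^ (a - 1) * (1 + v) ^ (-(a + b))) (Ioi 0) := by
  rw [← image_div_one_sub_Ioo,
    integrableOn_image_iff_integrableOn_abs_deriv_smul measurableSet_Ioo
      hasDerivWithinAt_div_one_sub_Ioo injOn_div_one_sub_Ioo]
  refine ((integrableOn_Ioc_rpow_mul_one_sub_rpow ha hb).mono_set Ioo_subset_Ioc_self).congr_fun
    (fun x hx => ?_) measurableSet_Ioo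
  exact (abs_deriv_mul_rpow_div_one_sub hx).symm

lemma integral_Ioi_rpow_mul_one_add_rpow {a b : ℝ} (ha : 0 < a) (hb : 0 < b) :
    ∫ v in Ioi (0 : ℝ), v ^ (a - 1) * (1 + v) ^ (-(a + b)) =
      Gamma a * Gamma b / Gamma (a + b) := by
  rw [← image_div_one_sub_Ioo,
    integral_image_eq_integral_abs_deriv_smul measurableSet_Ioo
      hasDerivWithinAt_div_one_sub_Ioo injOn_div_one_sub_Ioo]
  simp only [smul_eq_mul]
  rw [setIntegral_congr_fun measurableSet_Ioo fun x hx => abs_deriv_mul_rpow_div_one_sub hx,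
    ← integral_Ioc_eq_integral_Ioo, integral_Ioc_rpow_mul_one_sub_rpow ha hb]

lemma rpow_mul_add_rpow_scale {t v : ℝ} (a b : ℝ) (ht : 0 < t) (hv : 0 ≤ v) :
    (t * v) ^ a * (t + t * v) ^ b = t ^ (a + b) * (v ^ a * (1 + v) ^ b) := by
  rw [show t + t * v = t * (1 + v) by ring, mul_rpow ht.le hv, mul_rpow ht.le (by linarith),
    rpow_add ht]
  ring

lemma integrableOn_Ioi_rpow_mul_add_rpow {a b t : ℝ} (ht : 0 < t)
    (h : IntegrableOn (fun v : ℝ => v ^ a * (1 + v) ^ b) (Ioi 0)) :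
    IntegrableOn (fun u : ℝ => u ^ a * (t + u) ^ b) (Ioi 0) := by
  rw [← mul_zero t, ← integrableOn_Ioi_comp_mul_left_iff _ 0 ht]
  exact IntegrableOn.congr_fun (h.const_mul (t ^ (a + b)))
    (fun v hv => (rpow_mul_add_rpow_scale a b ht (le_of_lt hv)).symm) measurableSet_Ioi

lemma integral_Ioi_rpow_mul_add_rpow (a b : ℝ) {t : ℝ} (ht : 0 < t) :
    ∫ u in Ioi (0 : ℝ), u ^ a * (t + u) ^ b =
      t ^ (a + b + 1) * ∫ v in Ioi (0 : ℝ), v ^ a * (1 + v) ^ b := by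
  have h := integral_comp_mul_left_Ioi' (fun u : ℝ => u ^ a * (t + u) ^ b) 0 ht
  rw [mul_zero] at h
  rw [← h, setIntegral_congr_fun measurableSet_Ioi fun v hv =>
      rpow_mul_add_rpow_scale a b ht (le_of_lt hv),
    integral_const_mul, smul_eq_mul, ← mul_assoc, rpow_add_one ht.ne', mul_comm t]

lemma integral_Ioc_mul_rpow_add_sub_one {p : ℝ} (u : ℝ) (hp : 0 < p) :
    ∫ t in Ioc (0 : ℝ) 1, p * (t + u) ^ (p - 1) = (1 + u) ^ p - u ^ p := by
  rw [← intervalIntegral.integral_of_le zero_le_one, intervalIntegral.integral_const_mul,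
    intervalIntegral.integral_comp_add_right (fun x => x ^ (p - 1)),
    integral_rpow (Or.inl (by linarith)), sub_add_cancel, zero_add]
  field_simp

lemma Gamma_mul_Gamma_sub_one_div_Gamma (a : ℝ) {b : ℝ} (hb : b ≠ 1) (hab : a + b ≠ 1) :
    Gamma a * Gamma (b - 1) / Gamma (a + b - 1) =
      (a + b - 1) / (b - 1) * (Gamma a * Gamma b / Gamma (a + b)) := by
  have hb' : b - 1 ≠ 0 := sub_ne_zero.2 hb
  have hab' : a + b - 1 ≠ 0 := sub_ne_zero.2 hab
  have hΓb : Gamma b = (b - 1) * Gamma (b - 1) := by simpa using Gamma_add_one hb'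
  have hΓab : Gamma (a + b) = (a + b - 1) * Gamma (a + b - 1) := by
    simpa using Gamma_add_one hab'
  rw [hΓb, hΓab]
  rcases eq_or_ne (Gamma (a + b - 1)) 0 with h | h
  · simp [h]
  · field_simp

lemma integral_Ioc_zero_one_rpow {r : ℝ} (hr : -1 < r) :
    ∫ t in Ioc (0 : ℝ) 1, t ^ r = 1 / (r + 1) := by
  rw [← intervalIntegral.integral_of_le zero_le_one, integral_rpow (Or.inl hr), one_rpow,
    zero_rpow (by linarith)]
  ring

lemma integrableOn_Ioi_rpow_neg_mul_one_add_rpow {p q : ℝ} (hpq : p < q) (hq : q < 1) :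
    IntegrableOn (fun v : ℝ => v ^ (-q) * (1 + v) ^ (p - 1)) (Ioi 0) := by
  have h := integrableOn_Ioi_rpow_mul_one_add_rpow (a := 1 - q) (b := q - p)
    (by linarith) (by linarith)
  rwa [show 1 - q - 1 = -q by ring, show -(1 - q + (q - p)) = p - 1 by ring] at h

lemma integral_Ioi_rpow_neg_mul_one_add_rpow {p q : ℝ} (hpq : p < q) (hq : q < 1) :
    ∫ v in Ioi (0 : ℝ), v ^ (-q) * (1 + v) ^ (p - 1) =
      Gamma (1 - q) * Gamma (q - p) / Gamma (1 - p) := by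
  have h := integral_Ioi_rpow_mul_one_add_rpow (a := 1 - q) (b := q - p)
    (by linarith) (by linarith)
  rwa [show 1 - q - 1 = -q by ring, show -(1 - q + (q - p)) = p - 1 by ring,
    show 1 - q + (q - p) = 1 - p by ring] at h

lemma integral_Ioi_rpow_neg_mul_add_rpow (p q : ℝ) {t : ℝ} (ht : 0 < t) :
    ∫ u in Ioi (0 : ℝ), p * (u ^ (-q) * (t + u) ^ (p - 1)) =
      p * (∫ v in Ioi (0 : ℝ), v ^ (-q) * (1 + v) ^ (p - 1)) * t ^ (p - q) := by
  rw [integral_const_mul, integral_Ioi_rpow_mul_add_rpow _ _ ht]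
  ring_nf

lemma integrable_prod_rpow_neg_mul_add_rpow {p q : ℝ} (hp : 0 < p) (hpq : p < q)
    (hq : q < 1) :
    Integrable (Function.uncurry fun t u : ℝ => p * (u ^ (-q) * (t + u) ^ (p - 1)))
      ((volume.restrict (Ioc 0 1)).prod (volume.restrict (Ioi 0))) := by
  have hK := integrableOn_Ioi_rpow_neg_mul_one_add_rpow hpq hq
  rw [integrable_prod_iff (by fun_prop)]
  constructor
  · filter_upwards [ae_restrict_mem measurableSet_Ioc] with t ht
    exact (integrableOn_Ioi_rpow_mul_add_rpow ht.1 hK).const_mul p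
  · have hpow : IntegrableOn (fun t : ℝ => t ^ (p - q)) (Ioc 0 1) :=
      (intervalIntegrable_iff_integrableOn_Ioc_of_le zero_le_one).1
        (intervalIntegral.intervalIntegrable_rpow' (by linarith))
    refine (hpow.const_mul (p * ∫ v in Ioi (0 : ℝ), v ^ (-q) * (1 + v) ^ (p - 1))).congr ?_
    filter_upwards [ae_restrict_mem measurableSet_Ioc] with t ht
    rw [← integral_Ioi_rpow_neg_mul_add_rpow p q ht.1]
    refine setIntegral_congr_fun measurableSet_Ioi fun u (hu : 0 < u) => ?_
    simp only [Function.uncurry_apply_pair, Real.norm_eq_abs]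
    exact (abs_of_nonneg (by have := ht.1; positivity)).symm

/-- The regularized Beta-type integral
`∫_0^∞ ((1+u)^p − u^p) u^{−q} du = Γ(q−p−1)Γ(1−q)/Γ(−p)` evaluated in the operator product
expansion without reflection (Lemma B.1 of the paper). -/
theorem regularized_beta_integral (p q : ℝ) (hp : 0 < p) (hpq : p < q) (hq : q < 1) :
    IntegrableOn (fun u : ℝ => ((1 + u) ^ p - u ^ p) * u ^ (-q)) (Set.Ioi 0) ∧
    ∫ u in Set.Ioi (0 : ℝ), ((1 + u) ^ p - u ^ p) * u ^ (-q) =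
      Real.Gamma (q - p - 1) * Real.Gamma (1 - q) / Real.Gamma (-p) := by
  have hF := integrable_prod_rpow_neg_mul_add_rpow hp hpq hq
  have hdiff : (fun u : ℝ => ∫ t in Ioc (0 : ℝ) 1, p * (u ^ (-q) * (t + u) ^ (p - 1))) =
      fun u => ((1 + u) ^ p - u ^ p) * u ^ (-q) := funext fun u => by
    rw [← integral_Ioc_mul_rpow_add_sub_one u hp, ← integral_mul_const]
    congr 1 with t
    ring
  rw [← hdiff]
  refine ⟨hF.integral_prod_right, ?_⟩
  have hΓ := Gamma_mul_Gamma_sub_one_div_Gamma (1 - q) (b := q - p) (by linarith) (by linarith)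
  rw [show 1 - q + (q - p) - 1 = -p by ring, show 1 - q + (q - p) = 1 - p by ring] at hΓ
  rw [← integral_integral_swap hF, setIntegral_congr_fun measurableSet_Ioc fun t ht =>
      integral_Ioi_rpow_neg_mul_add_rpow p q ht.1, integral_const_mul,
    integral_Ioc_zero_one_rpow (by linarith), integral_Ioi_rpow_neg_mul_one_add_rpow hpq hq,
    mul_comm (Gamma (q - p - 1)), hΓ]
  have : p - q + 1 ≠ 0 := by linarith
  have : q - p - 1 ≠ 0 := by linarith
  field_simp
  ring
end

section
/- Let γ > 0 be a real number with γ² irrational and let β₀ ∈ ℝ. Let M : ℝ → Matrix (Fin 2) (Fin 2) ℂ be continuous, and let A : ℝ → Matrix (Fin 2) (Fin 2) ℂ be such that A(β) is invertible for every β ∈ ℝ. Assume that for all β ∈ ℝ: A(β + 4/γ) = A(β); M(β + γ) = A(β) · M(β) · A(β)⁻¹; M(β + 4/γ) = M(β); and that M(β₀) = 1 (the 2×2 identity matrix). Then M(β) = 1 for all β ∈ ℝ. -/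
/-!
The set `Z = {β | M β = 1}` is closed, contains `β₀`, and is invariant under translation by `γ`
(conjugation fixes only the identity) and by `4 / γ`; hence it is invariant under the subgroup
`γℤ + (4/γ)ℤ`, which is dense because `γ / (4 / γ) = γ² / 4` is irrational. A closed set containing
a dense coset is everything.
-/

open Set

theorem Matrix.mul_mul_nonsing_inv_eq_one_iff {n R : Type*} [Fintype n] [DecidableEq n]
    [CommRing R] {A B : Matrix n n R} (hA : IsUnit A) : A * B * A⁻¹ = 1 ↔ B = 1 := by
  lift A to (Matrix n n R)ˣ using hA
  rw [← Matrix.coe_units_inv, Units.mul_inv_eq_one, A.isUnit.mul_eq_left]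

theorem AddSubgroup.add_mem_iff_of_mem_closure {G : Type*} [AddGroup G] {T Z : Set G}
    (hT : ∀ t ∈ T, ∀ x, x + t ∈ Z ↔ x ∈ Z) {g : G} (hg : g ∈ AddSubgroup.closure T) (x : G) :
    x + g ∈ Z ↔ x ∈ Z := by
  induction hg using AddSubgroup.closure_induction generalizing x with
  | mem t ht => exact hT t ht x
  | zero => rw [add_zero]
  | add g h _ _ hg hh => rw [← add_assoc, hh, hg]
  | neg g _ hg => rw [← hg, neg_add_cancel_right]

theorem eq_univ_of_isClosed_of_add_invariant {G : Type*} [TopologicalSpace G] [AddGroup G]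
    [ContinuousAdd G] {T Z : Set G} (hZ : IsClosed Z)
    (hdense : Dense (AddSubgroup.closure T : Set G)) (hT : ∀ t ∈ T, ∀ x, x + t ∈ Z ↔ x ∈ Z)
    {x₀ : G} (hx₀ : x₀ ∈ Z) : Z = univ := by
  have hclosure : (AddSubgroup.closure T : Set G) ⊆ (x₀ + ·) ⁻¹' Z := fun g hg =>
    (AddSubgroup.add_mem_iff_of_mem_closure hT hg x₀).2 hx₀
  have hpre : (x₀ + ·) ⁻¹' Z = univ := eq_univ_of_univ_subset <| hdense.closure_eq ▸
    ((hZ.preimage (continuous_const_add x₀)).closure_subset_iff.2 hclosure)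
  refine eq_univ_of_forall fun x => ?_
  have hx : -x₀ + x ∈ (x₀ + ·) ⁻¹' Z := hpre ▸ mem_univ _
  simpa only [mem_preimage, add_neg_cancel_left] using hx

theorem dense_addSubgroupClosure_pair_div_self {γ : ℝ} (c : ℕ) (hc : c ≠ 0)
    (hirr : Irrational (γ ^ 2)) : Dense (AddSubgroup.closure {γ, c / γ} : Set ℝ) := by
  rw [dense_addSubgroupClosure_pair_iff, div_div_eq_mul_div, ← sq]
  exact hirr.div_natCast hc

theorem matrix_shift_rigidity_general (γ : ℝ) (hirr : Irrational (γ ^ 2)) (β₀ : ℝ)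
    (M A : ℝ → Matrix (Fin 2) (Fin 2) ℂ)
    (hM : Continuous M)
    (hA : ∀ β : ℝ, IsUnit (A β))
    (hconj : ∀ β : ℝ, M (β + γ) = A β * M β * (A β)⁻¹)
    (hMper : ∀ β : ℝ, M (β + 4 / γ) = M β)
    (hM0 : M β₀ = 1) :
    ∀ β : ℝ, M β = 1 := by
  have hinv : ∀ t ∈ ({γ, 4 / γ} : Set ℝ), ∀ β, β + t ∈ {β | M β = 1} ↔ β ∈ {β | M β = 1} := by
    rintro t (rfl | rfl) β
    · simpa only [mem_ofPred_eq, hconj] using Matrix.mul_mul_nonsing_inv_eq_one_iff (hA β)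
    · simp only [mem_ofPred_eq, hMper]
  have hZ := eq_univ_of_isClosed_of_add_invariant (isClosed_eq hM continuous_const)
    (by exact_mod_cast dense_addSubgroupClosure_pair_div_self 4 four_ne_zero hirr) hinv hM0
  exact eq_univ_iff_forall.1 hZ

/-- Matrix rigidity lemma abstracting the uniqueness argument in the proof of Theorem 1.1 of
the paper: a continuous matrix-valued function satisfying a conjugation relation under
`β ↦ β + γ` (with `4/γ`-periodic conjugating matrices), which is `4/γ`-periodic and equals the
identity at one point, equals the identity everywhere, provided `γ²` is irrational. -/
theorem matrix_shift_rigidity (γ : ℝ) (hγ : 0 < γ) (hirr : Irrational (γ ^ 2)) (β₀ : ℝ)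
    (M A : ℝ → Matrix (Fin 2) (Fin 2) ℂ)
    (hM : Continuous M)
    (hA : ∀ β : ℝ, IsUnit (A β))
    (hAper : ∀ β : ℝ, A (β + 4 / γ) = A β)
    (hconj : ∀ β : ℝ, M (β + γ) = A β * M β * (A β)⁻¹)
    (hMper : ∀ β : ℝ, M (β + 4 / γ) = M β)
    (hM0 : M β₀ = 1) :
    ∀ β : ℝ, M β = 1 :=
  matrix_shift_rigidity_general γ hirr β₀ M A hM hA hconj hMper hM0
end

section
/- Let γ > 0 and a > 0 be real and let ℓ ∈ ℂ satisfy Re ℓ ≥ 0. Then lim_{s → (−γ/2)⁺} (s + γ/2) · ∫_ℝ e^{sc} ( exp(−a e^{γc} − ℓ e^{γc/2}) − 1 ) dc = −ℓ. -/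
open MeasureTheory Filter Topology Set

/-! On `c < 0` the integrand is `−ℓ e^{γc/2} + O(e^{γc})`, and the first-order term alone
contributes `−ℓ ∫_{c<0} e^{(s+γ/2)c} dc = −ℓ/(s + γ/2)`. The rest is dominated, uniformly
for `s ∈ (−γ/2, −γ/4)`, by a multiple of `e^{−γ|c|/4}`, so its integral stays bounded and
is killed by the factor `s + γ/2`. -/

theorem Complex.norm_exp_sub_one_sub_id_le_of_re_nonpos {z : ℂ} (hz : z.re ≤ 0) :
    ‖exp z - 1 - z‖ ≤ 3 * ‖z‖ ^ 2 := by
  rcases le_or_gt ‖z‖ 1 with h | h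
  · nlinarith [norm_exp_sub_one_sub_id_le h, sq_nonneg ‖z‖]
  · have hexp : ‖exp z‖ ≤ 1 := by rw [norm_exp]; exact Real.exp_le_one_iff.2 hz
    calc ‖exp z - 1 - z‖ ≤ ‖exp z‖ + ‖(1 : ℂ)‖ + ‖z‖ :=
          norm_sub_le_of_le (norm_sub_le _ _) le_rfl
      _ ≤ 3 * ‖z‖ ^ 2 := by rw [norm_one]; nlinarith

theorem integrable_exp_neg_mul_abs {b : ℝ} (hb : 0 < b) :
    Integrable fun x : ℝ => Real.exp (-b * |x|) := by
  rw [← integrableOn_univ, ← Iic_union_Ioi (a := (0 : ℝ))]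
  refine IntegrableOn.union ?_ ?_
  · refine (integrableOn_exp_mul_Iic hb 0).congr_fun (fun x hx => ?_) measurableSet_Iic
    simp [abs_of_nonpos (show x ≤ 0 from hx)]
  · refine (integrableOn_exp_mul_Ioi (neg_neg_of_pos hb) 0).congr_fun (fun x hx => ?_)
      measurableSet_Ioi
    simp [abs_of_pos (show 0 < x from hx)]

section
variable {γ a : ℝ} {ℓ : ℂ}

theorem re_neg_mul_sub_mul_nonpos (ha : 0 ≤ a) (hℓ : 0 ≤ ℓ.re) {u v : ℝ} (hu : 0 ≤ u)
    (hv : 0 ≤ v) :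
    (-(a * u : ℂ) - ℓ * v).re ≤ 0 := by
  simp only [Complex.sub_re, Complex.neg_re, Complex.mul_re, Complex.ofReal_re,
    Complex.ofReal_im]
  nlinarith [mul_nonneg ha hu, mul_nonneg hℓ hv]

theorem norm_exp_neg_mul_sq_sub_mul_sub_one_add_mul_le (ha : 0 ≤ a) (hℓ : 0 ≤ ℓ.re) {v : ℝ}
    (hv₀ : 0 ≤ v) (hv₁ : v ≤ 1) :
    ‖Complex.exp (-(a * (v ^ 2 : ℝ) : ℂ) - ℓ * v) - 1 + ℓ * v‖ ≤
      (3 * (a + ‖ℓ‖) ^ 2 + a) * v ^ 2 := by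
  set z : ℂ := -(a * (v ^ 2 : ℝ) : ℂ) - ℓ * v
  have hz : ‖z‖ ≤ (a + ‖ℓ‖) * v := by
    have : v ^ 2 ≤ v := by nlinarith
    calc ‖z‖ ≤ a * v ^ 2 + ‖ℓ‖ * v := by
          refine (norm_sub_le _ _).trans_eq ?_
          simp [abs_of_nonneg ha, abs_of_nonneg hv₀]
      _ ≤ (a + ‖ℓ‖) * v := by nlinarith
  calc ‖Complex.exp z - 1 + ℓ * v‖ = ‖(Complex.exp z - 1 - z) - (a * v ^ 2 : ℝ)‖ := by
        congr 1; simp only [z]; push_cast; ring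
    _ ≤ 3 * ‖z‖ ^ 2 + a * v ^ 2 := by
        refine (norm_sub_le _ _).trans (add_le_add ?_ ?_)
        · exact Complex.norm_exp_sub_one_sub_id_le_of_re_nonpos
            (re_neg_mul_sub_mul_nonpos ha hℓ (sq_nonneg v) hv₀)
        · simp [abs_of_nonneg ha]
    _ ≤ (3 * (a + ‖ℓ‖) ^ 2 + a) * v ^ 2 := by
        nlinarith [pow_le_pow_left₀ (norm_nonneg z) hz 2]

noncomputable def zeroModeRemainder (γ a : ℝ) (ℓ : ℂ) (c : ℝ) : ℂ :=
  Complex.exp (-(a * Real.exp (γ * c)) - ℓ * Real.exp (γ * c / 2)) - 1 +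
    (Iio 0).indicator (fun c => ℓ * Real.exp (γ * c / 2)) c

theorem norm_exp_mul_zeroModeRemainder_le (hγ : 0 < γ) (ha : 0 ≤ a) (hℓ : 0 ≤ ℓ.re) {s : ℝ}
    (hs : s ∈ Ioo (-(γ / 2)) (-(γ / 4))) (c : ℝ) :
    ‖Complex.exp (s * c) * zeroModeRemainder γ a ℓ c‖ ≤
      (3 * (a + ‖ℓ‖) ^ 2 + a + 2) * Real.exp (-(γ / 4) * |c|) := by
  have hC : 0 ≤ 3 * (a + ‖ℓ‖) ^ 2 + a := by positivity
  rw [norm_mul, ← Complex.ofReal_mul, Complex.norm_exp_ofReal]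
  rcases lt_or_ge c 0 with hc | hc
  · have hv₁ : Real.exp (γ * c / 2) ≤ 1 := Real.exp_le_one_iff.2 (by nlinarith)
    have hsq : Real.exp (γ * c) = Real.exp (γ * c / 2) ^ 2 := by
      rw [← Real.exp_nat_mul]; ring_nf
    have hR := norm_exp_neg_mul_sq_sub_mul_sub_one_add_mul_le ha hℓ (Real.exp_nonneg _) hv₁
    rw [← hsq] at hR
    rw [zeroModeRemainder, indicator_of_mem (mem_Iio.2 hc)]
    calc Real.exp (s * c) * _
        ≤ Real.exp (s * c) * ((3 * (a + ‖ℓ‖) ^ 2 + a) * Real.exp (γ * c)) :=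
          mul_le_mul_of_nonneg_left hR (Real.exp_nonneg _)
      _ = (3 * (a + ‖ℓ‖) ^ 2 + a) * Real.exp ((s + γ) * c) := by
          rw [add_mul s, Real.exp_add]; ring
      _ ≤ _ := by
          refine mul_le_mul (by linarith) (Real.exp_le_exp.2 ?_) (Real.exp_nonneg _)
            (by linarith)
          rw [abs_of_neg hc]; nlinarith [hs.1]
  · rw [zeroModeRemainder, indicator_of_notMem (notMem_Iio.2 hc), add_zero]
    have hF :
        ‖Complex.exp (-(a * Real.exp (γ * c)) - ℓ * Real.exp (γ * c / 2)) - 1‖ ≤ 2 := by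
      refine (norm_sub_le _ _).trans ?_
      rw [norm_one, Complex.norm_exp, one_add_one_eq_two.symm]
      gcongr
      exact Real.exp_le_one_iff.2
        (re_neg_mul_sub_mul_nonpos ha hℓ (Real.exp_nonneg _) (Real.exp_nonneg _))
    calc Real.exp (s * c) * _ ≤ Real.exp (-(γ / 4) * |c|) * 2 := by
          refine mul_le_mul (Real.exp_le_exp.2 ?_) hF (norm_nonneg _) (Real.exp_nonneg _)
          rw [abs_of_nonneg hc]; nlinarith [hs.2]
      _ ≤ _ := by nlinarith [Real.exp_pos (-(γ / 4) * |c|)]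

theorem integrable_exp_mul_zeroModeRemainder (hγ : 0 < γ) (ha : 0 ≤ a) (hℓ : 0 ≤ ℓ.re)
    {s : ℝ} (hs : s ∈ Ioo (-(γ / 2)) (-(γ / 4))) :
    Integrable fun c : ℝ => Complex.exp (s * c) * zeroModeRemainder γ a ℓ c := by
  refine ((integrable_exp_neg_mul_abs (by positivity : 0 < γ / 4)).const_mul _).mono' ?_
    (ae_of_all _ (norm_exp_mul_zeroModeRemainder_le hγ ha hℓ hs))
  unfold zeroModeRemainder
  fun_prop (disch := exact measurableSet_Iio)

theorem integral_exp_mul_eq_integral_zeroModeRemainder_sub (hγ : 0 < γ) (ha : 0 ≤ a)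
    (hℓ : 0 ≤ ℓ.re) {s : ℝ} (hs : s ∈ Ioo (-(γ / 2)) (-(γ / 4))) :
    ∫ c : ℝ, Complex.exp (s * c) *
        (Complex.exp (-(a * Real.exp (γ * c)) - ℓ * Real.exp (γ * c / 2)) - 1) =
      (∫ c : ℝ, Complex.exp (s * c) * zeroModeRemainder γ a ℓ c) - ℓ / (s + γ / 2) := by
  have hw : 0 < ((s : ℂ) + γ / 2).re := by simp; linarith [hs.1]
  set pole : ℝ → ℂ := (Iio 0).indicator fun c => ℓ * Complex.exp ((s + γ / 2) * c)
  have hpole_int : Integrable pole :=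
    (integrable_indicator_iff measurableSet_Iio).2
      (((integrableOn_exp_mul_complex_Iic hw 0).mono_set Iio_subset_Iic_self).const_mul ℓ)
  have hpole : ∫ c, pole c = ℓ / (s + γ / 2) := by
    rw [integral_indicator measurableSet_Iio, integral_const_mul,
      ← integral_Iic_eq_integral_Iio, integral_exp_mul_complex_Iic hw]
    simp [div_eq_mul_inv]
  rw [← hpole, ← integral_sub (integrable_exp_mul_zeroModeRemainder hγ ha hℓ hs) hpole_int]
  congr 1 with c
  rcases lt_or_ge c 0 with hc | hc
  · have hexp :
        Complex.exp (s * c) * Real.exp (γ * c / 2) = Complex.exp ((s + γ / 2) * c) := by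
      rw [Complex.ofReal_exp, ← Complex.exp_add]; push_cast; ring_nf
    simp only [zeroModeRemainder, pole, indicator_of_mem (mem_Iio.2 hc), ← hexp]
    ring
  · simp [zeroModeRemainder, pole, indicator_of_notMem (notMem_Iio.2 hc)]

theorem norm_integral_exp_mul_zeroModeRemainder_le (hγ : 0 < γ) (ha : 0 ≤ a) (hℓ : 0 ≤ ℓ.re)
    {s : ℝ} (hs : s ∈ Ioo (-(γ / 2)) (-(γ / 4))) :
    ‖∫ c : ℝ, Complex.exp (s * c) * zeroModeRemainder γ a ℓ c‖ ≤
      ∫ c : ℝ, (3 * (a + ‖ℓ‖) ^ 2 + a + 2) * Real.exp (-(γ / 4) * |c|) :=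
  norm_integral_le_of_norm_le
    ((integrable_exp_neg_mul_abs (by positivity : 0 < γ / 4)).const_mul _)
    (ae_of_all _ (norm_exp_mul_zeroModeRemainder_le hγ ha hℓ hs))

end

/-- Deterministic core of the second residue computation in Lemma 5.1 of the paper:
`(s + γ/2) · ∫_ℝ e^{sc} (exp(−a e^{γc} − ℓ e^{γc/2}) − 1) dc → −ℓ` as `s → (−γ/2)⁺`. -/
theorem truncated_zero_mode_residue_limit (γ a : ℝ) (hγ : 0 < γ) (ha : 0 < a)
    (ℓ : ℂ) (hℓ : 0 ≤ ℓ.re) :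
    Tendsto (fun s : ℝ => ((s : ℂ) + γ / 2) *
        ∫ c : ℝ, Complex.exp (s * c) *
          (Complex.exp (-(a * Real.exp (γ * c)) - ℓ * Real.exp (γ * c / 2)) - 1))
      (nhdsWithin (-(γ / 2)) (Set.Ioi (-(γ / 2)))) (nhds (-ℓ)) := by
  have hnear : ∀ᶠ s in 𝓝[>] (-(γ / 2)), s ∈ Ioo (-(γ / 2)) (-(γ / 4)) :=
    Ioo_mem_nhdsGT (by linarith)
  have hε : Tendsto (fun s : ℝ => (s : ℂ) + γ / 2) (𝓝[>] (-(γ / 2))) (𝓝 0) := by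
    refine (Continuous.tendsto' (by fun_prop) _ _ ?_).mono_left nhdsWithin_le_nhds
    push_cast; ring
  have hbdd : IsBoundedUnder (· ≤ ·) (𝓝[>] (-(γ / 2)))
      ((‖·‖) ∘ fun s : ℝ => ∫ c : ℝ, Complex.exp (s * c) * zeroModeRemainder γ a ℓ c) :=
    isBoundedUnder_of_eventually_le
      (hnear.mono fun _ hs => norm_integral_exp_mul_zeroModeRemainder_le hγ ha.le hℓ hs)
  have hlim := (hε.zero_mul_isBoundedUnder_le hbdd).sub_const ℓ
  rw [zero_sub] at hlim
  refine hlim.congr' ?_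
  filter_upwards [hnear] with s hs
  have hε₀ : (s : ℂ) + γ / 2 ≠ 0 := by exact_mod_cast (show s + γ / 2 ≠ 0 by linarith [hs.1])
  rw [integral_exp_mul_eq_integral_zeroModeRemainder_sub hγ ha.le hℓ hs, mul_sub,
    mul_div_cancel₀ _ hε₀]
end
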